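/- arXiv:0911.2870 — 7 statements merged into one kernel-verified Lean document; each statement's English description precedes it below -/
import Mathlib

section
/- Let A be a set of positive integers, h ≥ 2, and g, k positive integers. If every integer has at most g pairwise disjoint representations as a sum of h elements of A, and A is a B_{h-1}[k] sequence, then A is a B_h[g(h(k-1)+1)] sequence. In particular A is a B_h[h·k·g] sequence. -/
def reps (A : Set ℕ) (h n : ℕ) : Set (Fin h → ℕ) :=
  {f | Monotone f ∧ (∀ i, f i ∈ A) ∧ ∑ i, f i = n}

noncomputable def repCount (A : Set ℕ) (h n : ℕ) : ℕ := (reps A h n).ncard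

-- auxiliary lemmas
lemma reps_finite (A : Set ℕ) (h n : ℕ) : (reps A h n).Finite := by
  apply Set.Finite.subset (Set.Finite.pi (fun _ : Fin h => Set.finite_Iic n))
  intro f hf
  intro i _
  have := hf.2.2
  calc f i ≤ ∑ j, f j := Finset.single_le_sum (fun j _ => Nat.zero_le (f j)) (Finset.mem_univ i)
    _ = n := this

lemma monotone_eq_of_perm {h : ℕ} {f f' : Fin h → ℕ} (hf : Monotone f) (hf' : Monotone f')
    (hp : (List.ofFn f).Perm (List.ofFn f')) : f = f' :=
  List.ofFn_injective (List.Perm.eq_of_sortedLE hf.sortedLE_ofFn hf'.sortedLE_ofFn hp)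

lemma ofFn_coe_multiset {k : ℕ} (g : Fin k → ℕ) :
    (↑(List.ofFn g) : Multiset ℕ) = Multiset.map g Finset.univ.val := by
  rw [List.ofFn_eq_map, Fin.univ_def]
  rfl

lemma ofFn_perm_succAbove {m : ℕ} (f : Fin (m+1) → ℕ) (j : Fin (m+1)) :
    (List.ofFn f).Perm (f j :: List.ofFn (fun i => f (j.succAbove i))) := by
  rw [← Multiset.coe_eq_coe]
  have : (↑(f j :: List.ofFn (fun i => f (j.succAbove i))) : Multiset ℕ)
      = f j ::ₘ ↑(List.ofFn (fun i => f (j.succAbove i))) := rfl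
  rw [this, ofFn_coe_multiset, ofFn_coe_multiset, Fin.univ_succAbove m j,
    Finset.cons_val, Multiset.map_cons, Finset.map_val, Multiset.map_map]
  rfl

lemma count_contain (A : Set ℕ) (m n a : ℕ) :
    {f | f ∈ reps A (m+1) n ∧ ∃ j, f j = a}.ncard ≤ repCount A m (n - a) := by
  classical
  have hfin : (reps A m (n - a)).Finite := reps_finite A m (n - a)
  set D : (Fin (m+1) → ℕ) → (Fin m → ℕ) := fun f =>
    if hex : ∃ j, f j = a then fun i => f ((Classical.choose hex).succAbove i)
    else fun _ => 0 with hD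
  have hDval : ∀ f : Fin (m+1) → ℕ, ∀ hex : ∃ j, f j = a,
      D f = fun i => f ((Classical.choose hex).succAbove i) := by
    intro f hex; simp only [hD, dif_pos hex]
  have hsum : ∀ f : Fin (m+1) → ℕ, ∀ hex : ∃ j, f j = a, f ∈ reps A (m+1) n →
      a + ∑ i, D f i = n := by
    intro f hex hf
    rw [hDval f hex]
    have hs := Fin.sum_univ_succAbove f (Classical.choose hex)
    rw [Classical.choose_spec hex] at hs
    rw [← hs]; exact hf.2.2
  apply Set.ncard_le_ncard_of_injOn D _ _ hfin
  · rintro f ⟨hf, hex⟩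
    refine ⟨?_, ?_, ?_⟩
    · rw [hDval f hex]
      exact hf.1.comp (Fin.strictMono_succAbove _).monotone
    · intro i; rw [hDval f hex]; exact hf.2.1 _
    · have := hsum f hex hf; omega
  · rintro f ⟨hf, hex⟩ f' ⟨hf', hex'⟩ heq
    apply monotone_eq_of_perm hf.1 hf'.1
    have p1 := ofFn_perm_succAbove f (Classical.choose hex)
    have p2 := ofFn_perm_succAbove f' (Classical.choose hex')
    rw [Classical.choose_spec hex] at p1
    rw [Classical.choose_spec hex'] at p2
    rw [← hDval f hex] at p1
    rw [← hDval f' hex'] at p2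
    rw [heq] at p1
    exact p1.trans p2.symm


def IsBhg (A : Set ℕ) (h g : ℕ) : Prop := ∀ n, repCount A h n ≤ g

/-- A family of pairwise disjoint representations: the value sets of distinct members
are disjoint. -/
def DisjFam {h : ℕ} (S : Finset (Fin h → ℕ)) : Prop :=
  ∀ f ∈ S, ∀ f' ∈ S, f ≠ f' → Disjoint (Set.range f) (Set.range f')

/-- `A` is a `B*_h[g]` sequence: no integer has more than `g` pairwise disjoint
representations as a sum of `h` elements of `A`. -/
def IsBhgStar (A : Set ℕ) (h g : ℕ) : Prop :=
  ∀ n, ∀ S : Finset (Fin h → ℕ), (∀ f ∈ S, f ∈ reps A h n) → DisjFam S → S.card ≤ g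

theorem stmt1 (A : Set ℕ) (hA : ∀ a ∈ A, 0 < a) (h g k : ℕ) (hh : 2 ≤ h)
    (hg : 1 ≤ g) (hk : 1 ≤ k)
    (hstar : IsBhgStar A h g) (hB : IsBhg A (h - 1) k) :
    IsBhg A h (g * (h * (k - 1) + 1)) ∧ IsBhg A h (h * k * g) := by
  classical
  obtain ⟨m, rfl⟩ : ∃ m, h = m + 1 := ⟨h - 1, by omega⟩
  simp only [Nat.add_sub_cancel] at hB
  have key : IsBhg A (m+1) (g * ((m+1) * (k - 1) + 1)) := by
    intro n
    have hRfin : (reps A (m+1) n).Finite := reps_finite A (m+1) n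
    set T : Finset (Fin (m+1) → ℕ) := hRfin.toFinset with hT
    have hmemT : ∀ f, f ∈ T ↔ f ∈ reps A (m+1) n := fun f => hRfin.mem_toFinset
    set 𝒮 := T.powerset.filter (fun S => DisjFam S) with h𝒮
    have hne : (∅ : Finset (Fin (m+1) → ℕ)) ∈ 𝒮 := by
      rw [h𝒮, Finset.mem_filter]
      exact ⟨Finset.mem_powerset.mpr (Finset.empty_subset _), fun f hf => absurd hf (Finset.notMem_empty f)⟩
    obtain ⟨S, hS, hmax⟩ := Finset.exists_max_image 𝒮 Finset.card ⟨∅, hne⟩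
    have hSsub : S ⊆ T := Finset.mem_powerset.mp (Finset.mem_filter.mp hS).1
    have hSdisj : DisjFam S := (Finset.mem_filter.mp hS).2
    have hScard : S.card ≤ g := hstar n S (fun f hf => (hmemT f).mp (hSsub hf)) hSdisj
    have hcover : ∀ f ∈ T, ∃ f' ∈ S, ∃ j i, f i = f' j := by
      intro f hf
      by_contra hcon
      push_neg at hcon
      have hdisj : ∀ f' ∈ S, Disjoint (Set.range f) (Set.range f') := by
        intro f' hf'
        rw [Set.disjoint_right]
        rintro a ⟨j, rfl⟩ ⟨i, hi⟩
        exact hcon f' hf' j i hi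
      have hfS : f ∉ S := fun hfS => (hcon f hfS 0 0) rfl
      have hins : insert f S ∈ 𝒮 := by
        rw [h𝒮, Finset.mem_filter, Finset.mem_powerset]
        refine ⟨Finset.insert_subset hf hSsub, ?_⟩
        intro g1 hg1 g2 hg2 hne12
        rcases Finset.mem_insert.mp hg1 with rfl | hg1' <;>
          rcases Finset.mem_insert.mp hg2 with rfl | hg2'
        · exact absurd rfl hne12
        · exact hdisj g2 hg2'
        · exact (hdisj g1 hg1').symm
        · exact hSdisj g1 hg1' g2 hg2' hne12
      have := hmax _ hins
      rw [Finset.card_insert_of_notMem hfS] at this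
      omega
    have hcnt : ∀ a : ℕ, (T.filter (fun f => ∃ i, f i = a)).card ≤ k := by
      intro a
      have hset : ((T.filter (fun f => ∃ i, f i = a)) : Set (Fin (m+1) → ℕ))
          = {f | f ∈ reps A (m+1) n ∧ ∃ j, f j = a} := by
        ext f
        simp only [Finset.coe_filter, Set.mem_setOf_eq, hmemT]
      calc (T.filter (fun f => ∃ i, f i = a)).card
          = ({f | f ∈ reps A (m+1) n ∧ ∃ j, f j = a}).ncard := by
            rw [← hset, Set.ncard_coe_finset]
        _ ≤ repCount A m (n - a) := count_contain A m n a
        _ ≤ k := hB (n - a)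
    have hBf : ∀ f' ∈ S,
        (T.filter (fun f => ∃ j i, f i = f' j)).card ≤ (m+1) * (k-1) + 1 := by
      intro f' hf'S
      have hsub : T.filter (fun f => ∃ j i, f i = f' j) ⊆
          insert f' (Finset.univ.biUnion (fun j : Fin (m+1) =>
            (T.filter (fun f => ∃ i, f i = f' j)).erase f')) := by
        intro f hf
        rcases Finset.mem_filter.mp hf with ⟨hfT, j, i, hij⟩
        by_cases hff' : f = f'
        · exact hff' ▸ Finset.mem_insert_self _ _
        · exact Finset.mem_insert_of_mem (Finset.mem_biUnion.mpr
            ⟨j, Finset.mem_univ j, Finset.mem_erase.mpr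
              ⟨hff', Finset.mem_filter.mpr ⟨hfT, i, hij⟩⟩⟩)
      calc (T.filter (fun f => ∃ j i, f i = f' j)).card
          ≤ (insert f' (Finset.univ.biUnion (fun j : Fin (m+1) =>
              (T.filter (fun f => ∃ i, f i = f' j)).erase f'))).card :=
            Finset.card_le_card hsub
        _ ≤ (Finset.univ.biUnion (fun j : Fin (m+1) =>
              (T.filter (fun f => ∃ i, f i = f' j)).erase f')).card + 1 :=
            Finset.card_insert_le _ _
        _ ≤ (∑ j : Fin (m+1), ((T.filter (fun f => ∃ i, f i = f' j)).erase f').card) + 1 :=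
            Nat.add_le_add_right Finset.card_biUnion_le 1
        _ ≤ (∑ _j : Fin (m+1), (k-1)) + 1 := by
            apply Nat.add_le_add_right
            apply Finset.sum_le_sum
            intro j _
            have hmem : f' ∈ T.filter (fun f => ∃ i, f i = f' j) :=
              Finset.mem_filter.mpr ⟨hSsub hf'S, j, rfl⟩
            rw [Finset.card_erase_of_mem hmem]
            exact Nat.sub_le_sub_right (hcnt (f' j)) 1
        _ = (m+1)*(k-1) + 1 := by
            simp [Finset.sum_const, mul_comm]
    have hTcard : repCount A (m+1) n = T.card := by
      rw [repCount, Set.ncard_eq_toFinset_card _ hRfin]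
    rw [hTcard]
    have hTsub : T ⊆ S.biUnion (fun f' => T.filter (fun f => ∃ j i, f i = f' j)) := by
      intro f hf
      obtain ⟨f', hf'S, j, i, hij⟩ := hcover f hf
      exact Finset.mem_biUnion.mpr ⟨f', hf'S, Finset.mem_filter.mpr ⟨hf, j, i, hij⟩⟩
    calc T.card ≤ (S.biUnion (fun f' => T.filter (fun f => ∃ j i, f i = f' j))).card :=
          Finset.card_le_card hTsub
      _ ≤ ∑ f' ∈ S, (T.filter (fun f => ∃ j i, f i = f' j)).card := Finset.card_biUnion_le
      _ ≤ ∑ _f' ∈ S, ((m+1)*(k-1)+1) := Finset.sum_le_sum hBf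
      _ = S.card * ((m+1)*(k-1)+1) := by simp [Finset.sum_const, smul_eq_mul]
      _ ≤ g * ((m+1)*(k-1)+1) := Nat.mul_le_mul_right _ hScard
  refine ⟨key, fun n => le_trans (key n) ?_⟩
  obtain ⟨k', rfl⟩ : ∃ k', k = k' + 1 := ⟨k - 1, by omega⟩
  have h1 : (m+1)*(k'+1-1)+1 ≤ (m+1)*(k'+1) := by
    simp only [Nat.add_sub_cancel, Nat.mul_succ]
    omega
  calc g * ((m+1)*(k'+1-1)+1) ≤ g * ((m+1)*(k'+1)) := Nat.mul_le_mul_left _ h1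
    _ = (m+1)*(k'+1)*g := by ring
end

section
/- If a set A of positive integers is B*_3[g] (at most g pairwise disjoint representations of any n as a sum of three elements) and is a Sidon set (B_2[1]), then A is a B_3[g] sequence: every n has at most g representations as a sum of three nondecreasing elements of A. -/
lemma pairEq (A : Set ℕ) (hSidon : IsBhg A 2 1) {a b c d : ℕ}
    (hab : a ≤ b) (hcd : c ≤ d) (ha : a ∈ A) (hb : b ∈ A) (hc : c ∈ A) (hd : d ∈ A)
    (hsum : a + b = c + d) : a = c ∧ b = d := by
  have hpr : (fun i : Fin 2 => if i = 0 then a else b) ∈ reps A 2 (a + b) := by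
    refine ⟨?_, ?_, ?_⟩
    · intro i j hij
      fin_cases i <;> fin_cases j <;> simp_all [Fin.le_def]
    · intro i; fin_cases i <;> simpa
    · simp [Fin.sum_univ_two]
  have hqr : (fun i : Fin 2 => if i = 0 then c else d) ∈ reps A 2 (a + b) := by
    refine ⟨?_, ?_, ?_⟩
    · intro i j hij
      fin_cases i <;> fin_cases j <;> simp_all [Fin.le_def]
    · intro i; fin_cases i <;> simpa
    · simp [Fin.sum_univ_two, hsum.symm]
  have hfin := reps_finite A 2 (a + b)
  have hle : (reps A 2 (a + b)).ncard ≤ 1 := hSidon (a + b)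
  have hpq := (Set.ncard_le_one hfin).mp hle _ hpr _ hqr
  constructor
  · have := congrFun hpq 0; simpa using this
  · have := congrFun hpq 1; simpa using this

lemma tripleEq (A : Set ℕ) (hSidon : IsBhg A 2 1) {a0 a1 a2 b0 b1 b2 : ℕ}
    (ha0 : a0 ∈ A) (ha1 : a1 ∈ A) (ha2 : a2 ∈ A)
    (hb0 : b0 ∈ A) (hb1 : b1 ∈ A) (hb2 : b2 ∈ A)
    (h01 : a0 ≤ a1) (h12 : a1 ≤ a2) (k01 : b0 ≤ b1) (k12 : b1 ≤ b2)
    (hsum : a0 + a1 + a2 = b0 + b1 + b2)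
    (hshare : a0 = b0 ∨ a0 = b1 ∨ a0 = b2 ∨ a1 = b0 ∨ a1 = b1 ∨ a1 = b2 ∨
      a2 = b0 ∨ a2 = b1 ∨ a2 = b2) :
    a0 = b0 ∧ a1 = b1 ∧ a2 = b2 := by
  rcases hshare with h | h | h | h | h | h | h | h | h
  · obtain ⟨e1, e2⟩ := pairEq A hSidon h12 k12 ha1 ha2 hb1 hb2 (by omega); omega
  · obtain ⟨e1, e2⟩ := pairEq A hSidon h12 (k01.trans k12) ha1 ha2 hb0 hb2 (by omega); omega
  · obtain ⟨e1, e2⟩ := pairEq A hSidon h12 k01 ha1 ha2 hb0 hb1 (by omega); omega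
  · obtain ⟨e1, e2⟩ := pairEq A hSidon (h01.trans h12) k12 ha0 ha2 hb1 hb2 (by omega); omega
  · obtain ⟨e1, e2⟩ := pairEq A hSidon (h01.trans h12) (k01.trans k12) ha0 ha2 hb0 hb2 (by omega); omega
  · obtain ⟨e1, e2⟩ := pairEq A hSidon (h01.trans h12) k01 ha0 ha2 hb0 hb1 (by omega); omega
  · obtain ⟨e1, e2⟩ := pairEq A hSidon h01 k12 ha0 ha1 hb1 hb2 (by omega); omega
  · obtain ⟨e1, e2⟩ := pairEq A hSidon h01 (k01.trans k12) ha0 ha1 hb0 hb2 (by omega); omega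
  · obtain ⟨e1, e2⟩ := pairEq A hSidon h01 k01 ha0 ha1 hb0 hb1 (by omega); omega

/-- If `A` is `B*_3[g]` and a Sidon set (`B_2[1]`), then `A` is `B_3[g]`. -/
theorem stmt2 (A : Set ℕ) (hA : ∀ a ∈ A, 0 < a) (g : ℕ)
    (hstar : IsBhgStar A 3 g) (hSidon : IsBhg A 2 1) :
    IsBhg A 3 g := by
  intro n
  have hF : (reps A 3 n).Finite := reps_finite A 3 n
  set S := hF.toFinset with hS
  have hmem : ∀ f ∈ S, f ∈ reps A 3 n := by
    intro f hf; rwa [hS, Set.Finite.mem_toFinset] at hf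
  have hdisj : DisjFam S := by
    intro f hf f' hf' hne
    by_contra hnd
    rw [Set.not_disjoint_iff] at hnd
    obtain ⟨x, ⟨i, hi⟩, ⟨j, hj⟩⟩ := hnd
    obtain ⟨hm, hmemA, hsum⟩ := hmem f hf
    obtain ⟨hm', hmemA', hsum'⟩ := hmem f' hf'
    have hshare : f 0 = f' 0 ∨ f 0 = f' 1 ∨ f 0 = f' 2 ∨ f 1 = f' 0 ∨ f 1 = f' 1 ∨
        f 1 = f' 2 ∨ f 2 = f' 0 ∨ f 2 = f' 1 ∨ f 2 = f' 2 := by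
      fin_cases i <;> fin_cases j <;> simp_all <;> omega
    have hsum3 : f 0 + f 1 + f 2 = f' 0 + f' 1 + f' 2 := by
      have e1 : ∑ i, f i = f 0 + f 1 + f 2 := by rw [Fin.sum_univ_three]
      have e2 : ∑ i, f' i = f' 0 + f' 1 + f' 2 := by rw [Fin.sum_univ_three]
      omega
    obtain ⟨e0, e1, e2⟩ := tripleEq A hSidon (hmemA 0) (hmemA 1) (hmemA 2)
      (hmemA' 0) (hmemA' 1) (hmemA' 2)
      (hm (by decide : (0:Fin 3) ≤ 1)) (hm (by decide : (1:Fin 3) ≤ 2))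
      (hm' (by decide : (0:Fin 3) ≤ 1)) (hm' (by decide : (1:Fin 3) ≤ 2))
      hsum3 hshare
    apply hne
    funext k
    fin_cases k <;> assumption
  have := hstar n S hmem hdisj
  calc repCount A 3 n = S.card := by
        rw [repCount, hS, Set.ncard_eq_toFinset_card _ hF]
  _ ≤ g := this
end

section
/- Fix h ≥ 2 and a base sequence (q_i) with q_i ≥ 2. Suppose for each i the digit sets A_i ⊆ [0, q_i/h) satisfy: every integer has at most one representation as a sum of h nondecreasing elements of A_i. Let A be the set of natural numbers all of whose variable-base digits b_i lie in A_{i+1}. If a_1, ..., a_h ∈ A and n = a_1 + ... + a_h, then for each digit position j the j-th digit of n equals the sum of the j-th digits of a_1,...,a_h (there are no carries), and this sum of digits determines the multiset of j-th digits of the a_i uniquely. -/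
/-- The product of the first `i` bases (empty product is 1). -/
def baseProd (Q : ℕ → ℕ) (i : ℕ) : ℕ := ∏ j ∈ Finset.range i, Q j

/-- The `i`-th digit of `x` in the variable-base system with bases `Q`. -/
def vdigit (Q : ℕ → ℕ) (i x : ℕ) : ℕ := (x / baseProd Q i) % Q i

lemma map_comp_perm {h : ℕ} (f : Fin h → ℕ) (σ : Equiv.Perm (Fin h)) :
    Finset.univ.val.map (f ∘ σ) = Finset.univ.val.map f := by
  have : Finset.univ.val.map (f ∘ σ) = (Finset.univ.val.map σ).map f := by
    rw [Multiset.map_map]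
  rw [this]
  congr 1
  have := congrArg Finset.val (Finset.map_univ_equiv σ)
  set_option linter.unnecessarySimpa false in simpa using this

/-- If all digits of `a_1, …, a_h` lie in digit sets `D j ⊆ [0, Q j / h)` which are
`B_h[1]` sets, then summing produces no carries: each digit of the sum is the sum of
the corresponding digits, and the multiset of `j`-th digits of the summands is
determined by the sum. -/
theorem stmt4 (h : ℕ) (hh : 2 ≤ h) (Q : ℕ → ℕ) (hQ : ∀ i, 2 ≤ Q i)
    (D : ℕ → Set ℕ)
    (hDlt : ∀ j, ∀ d ∈ D j, (d : ℝ) < (Q j : ℝ) / h)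
    (hDB : ∀ j, IsBhg (D j) h 1)
    (A : Set ℕ) (hAdef : A = {x | ∀ j, vdigit Q j x ∈ D j})
    (a : Fin h → ℕ) (ha : ∀ i, a i ∈ A) (n : ℕ) (hn : n = ∑ i, a i) :
    (∀ j, vdigit Q j n = ∑ i, vdigit Q j (a i)) ∧
    (∀ a' : Fin h → ℕ, (∀ i, a' i ∈ A) → n = ∑ i, a' i →
      ∀ j, (Finset.univ.val.map fun i => vdigit Q j (a i)) =
           (Finset.univ.val.map fun i => vdigit Q j (a' i))) := by
  have hQpos : ∀ i, 0 < Q i := fun i => lt_of_lt_of_le (by norm_num) (hQ i)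
  have hhpos : (0:ℝ) < h := by positivity
  -- general digit sum bound
  have sumlt : ∀ (b : Fin h → ℕ), (∀ i, b i ∈ A) → ∀ j, (∑ i, vdigit Q j (b i)) < Q j := by
    intro b hb j
    have : ((∑ i, vdigit Q j (b i) : ℕ) : ℝ) < Q j := by
      push_cast
      calc (∑ i, (vdigit Q j (b i) : ℝ)) < ∑ _i : Fin h, (Q j : ℝ) / h := by
            apply Finset.sum_lt_sum_of_nonempty
            · exact Finset.univ_nonempty_iff.mpr ⟨⟨0, by omega⟩⟩
            · intro i _
              exact hDlt j _ (by have := hb i; rw [hAdef] at this; exact this j)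
        _ = h * ((Q j : ℝ) / h) := by rw [Finset.sum_const]; simp [mul_comm]
        _ = Q j := by field_simp
    exact_mod_cast this
  -- no-carry division identity for any family with digits in D
  have divsum : ∀ (b : Fin h → ℕ), (∀ i, b i ∈ A) →
      ∀ j, (∑ i, b i) / baseProd Q j = ∑ i, b i / baseProd Q j := by
    intro b hb j
    induction j with
    | zero => simp [baseProd]
    | succ j ih =>
      have hbp : baseProd Q (j+1) = baseProd Q j * Q j := by
        simp [baseProd, Finset.prod_range_succ]
      have key : ∀ x : ℕ, x / baseProd Q j = Q j * (x / baseProd Q (j+1)) + vdigit Q j x := by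
        intro x
        rw [hbp, ← Nat.div_div_eq_div_mul, vdigit]
        exact (Nat.div_add_mod _ _).symm
      have : (∑ i, b i) / baseProd Q (j+1)
          = ((∑ i, b i) / baseProd Q j) / Q j := by
        rw [hbp, Nat.div_div_eq_div_mul]
      rw [this, ih]
      have expand : (∑ i, b i / baseProd Q j)
          = Q j * (∑ i, b i / baseProd Q (j+1)) + ∑ i, vdigit Q j (b i) := by
        rw [Finset.mul_sum, ← Finset.sum_add_distrib]
        exact Finset.sum_congr rfl (fun i _ => key (b i))
      rw [expand, Nat.mul_add_div (hQpos j), Nat.div_eq_of_lt (sumlt b hb j), add_zero]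
  have digit_sum : ∀ (b : Fin h → ℕ), (∀ i, b i ∈ A) →
      ∀ j, vdigit Q j (∑ i, b i) = ∑ i, vdigit Q j (b i) := by
    intro b hb j
    rw [vdigit, divsum b hb j]
    have expand : (∑ i, b i / baseProd Q j)
        = Q j * (∑ i, b i / (baseProd Q j * Q j)) + ∑ i, vdigit Q j (b i) := by
      rw [Finset.mul_sum, ← Finset.sum_add_distrib]
      refine Finset.sum_congr rfl (fun i _ => ?_)
      rw [← Nat.div_div_eq_div_mul, vdigit]
      exact (Nat.div_add_mod _ _).symm
    rw [expand, Nat.mul_add_mod, Nat.mod_eq_of_lt (sumlt b hb j)]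
  subst hn
  refine ⟨digit_sum a ha, ?_⟩
  intro a' ha' hsum' j
  -- both digit families have equal sums
  have heq : ∑ i, vdigit Q j (a i) = ∑ i, vdigit Q j (a' i) := by
    rw [← digit_sum a ha j, ← digit_sum a' ha' j, ← hsum']
  set m := ∑ i, vdigit Q j (a i) with hm
  -- sorted versions
  set f := fun i => vdigit Q j (a i) with hf
  set f' := fun i => vdigit Q j (a' i) with hf'
  have hfD : ∀ i, f i ∈ D j := fun i => by
    have := ha i; rw [hAdef] at this; exact this j
  have hf'D : ∀ i, f' i ∈ D j := fun i => by
    have := ha' i; rw [hAdef] at this; exact this j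
  set g := f ∘ Tuple.sort f with hg
  set g' := f' ∘ Tuple.sort f' with hg'
  have hgmem : g ∈ reps (D j) h m := by
    refine ⟨Tuple.monotone_sort f, fun i => hfD _, ?_⟩
    rw [hg, hm]
    exact Fintype.sum_equiv (Tuple.sort f) _ _ (fun i => rfl)
  have hg'mem : g' ∈ reps (D j) h m := by
    refine ⟨Tuple.monotone_sort f', fun i => hf'D _, ?_⟩
    rw [hg', heq]
    exact Fintype.sum_equiv (Tuple.sort f') _ _ (fun i => rfl)
  have : g = g' := by
    have hcard : (reps (D j) h m).ncard ≤ 1 := hDB j m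
    exact (Set.ncard_le_one (reps_finite _ _ _)).mp hcard g hgmem g' hg'mem
  calc Finset.univ.val.map f = Finset.univ.val.map g := (map_comp_perm f _).symm
    _ = Finset.univ.val.map g' := by rw [this]
    _ = Finset.univ.val.map f' := map_comp_perm f' _
end

section
/- For every prime p and integer h ≥ 2, there exists a set S ⊆ [0, p^h − 2] of nonnegative integers with |S| = p such that every integer has at most one representation as a sum of h nondecreasing elements of S (i.e., S is a B_h[1] set of size p inside [0, p^h − 2]). -/
open Polynomial

/-- Bose–Chowla: for every prime `p` and `h ≥ 2` there is a `B_h[1]` set of `p`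
nonnegative integers inside `[0, p^h − 2]`. -/
theorem stmt7 (p h : ℕ) (hp : p.Prime) (hh : 2 ≤ h) :
    ∃ S : Finset ℕ, S.card = p ∧ (∀ s ∈ S, s ≤ p ^ h - 2) ∧
      IsBhg (↑S : Set ℕ) h 1 := by
  classical
  haveI : Fact p.Prime := ⟨hp⟩
  haveI : NeZero p := ⟨hp.pos.ne'⟩
  set F := GaloisField p h with hF
  have hph : 4 ≤ p ^ h := by
    calc (4 : ℕ) = 2 ^ 2 := rfl
    _ ≤ p ^ h := Nat.pow_le_pow_left hp.two_le h |>.trans' (Nat.pow_le_pow_right (by omega) hh) |>.trans (le_refl _) |>.trans (le_refl _)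
  have hcard : Nat.card F = p ^ h := GaloisField.card p h (by omega)
  obtain ⟨g, hg⟩ := IsCyclic.exists_generator (α := Fˣ)
  have horder : orderOf g = p ^ h - 1 := by
    rw [orderOf_eq_card_of_forall_mem_zpowers hg, Nat.card_units, hcard]
  set θ : F := (g : F) with hθ
  -- minimal polynomial has degree h
  have hint : IsIntegral (ZMod p) θ := Algebra.IsIntegral.isIntegral θ
  have hmin : (minpoly (ZMod p) θ).natDegree = h := by
    have htop : IntermediateField.adjoin (ZMod p) {θ} = ⊤ := by
      refine eq_top_iff.2 fun y _ => ?_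
      rcases eq_or_ne y 0 with rfl | hy
      · exact zero_mem _
      · obtain ⟨k, hk⟩ := hg (Units.mk0 y hy)
        have : θ ^ k = y := by
          have := congrArg (Units.val) hk
          simpa using this
        rw [← this]
        exact zpow_mem (IntermediateField.mem_adjoin_simple_self _ _) k
    have h1 : Module.finrank (ZMod p) (IntermediateField.adjoin (ZMod p) {θ}) =
        (minpoly (ZMod p) θ).natDegree := IntermediateField.adjoin.finrank hint
    rw [htop] at h1
    rw [← h1, IntermediateField.finrank_top', GaloisField.finrank p (by omega)]
  -- vanishing lemma
  have vanish : ∀ P : Polynomial (ZMod p), P.natDegree < h → aeval θ P = 0 → P = 0 := by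
    intro P hd hv
    by_contra hne
    have hdvd := minpoly.dvd (ZMod p) θ hv
    have := Polynomial.natDegree_le_of_dvd hdvd hne
    omega
  have hnotin : ∀ x : ZMod p, θ ≠ algebraMap (ZMod p) F x := by
    intro x hx
    have hv : aeval θ (X - C x) = 0 := by simp [hx]
    have := vanish (X - C x) (by rw [natDegree_X_sub_C]; omega) hv
    exact X_sub_C_ne_zero x this
  have hne0 : ∀ x : ZMod p, θ + algebraMap (ZMod p) F x ≠ 0 := by
    intro x hx
    refine hnotin (-x) ?_
    rw [map_neg]; linear_combination hx
  -- the Bose-Chowla map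
  have hex : ∀ x : ZMod p, ∃ k : ℕ, k ≤ p ^ h - 2 ∧
      θ + algebraMap (ZMod p) F x = θ ^ k := by
    intro x
    obtain ⟨m, hm⟩ := mem_powers_iff_mem_zpowers.mpr (hg (Units.mk0 _ (hne0 x)))
    refine ⟨m % (p ^ h - 1), ?_, ?_⟩
    · have : m % (p ^ h - 1) < p ^ h - 1 := Nat.mod_lt _ (by omega)
      omega
    · have h1 : g ^ (m % (p ^ h - 1)) = Units.mk0 _ (hne0 x) := by
        rw [← horder, pow_mod_orderOf]; exact hm
      have := congrArg (Units.val) h1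
      simpa using this.symm
  choose A hA1 hA2 using hex
  have hAinj : Function.Injective A := by
    intro x y hxy
    have h0 : θ ^ A x = θ ^ A y := by rw [hxy]
    have h2 : algebraMap (ZMod p) F x = algebraMap (ZMod p) F y := by
      linear_combination (hA2 x).trans (h0.trans (hA2 y).symm)
    exact (algebraMap (ZMod p) F).injective h2
  refine ⟨Finset.image A Finset.univ, ?_, ?_, ?_⟩
  · rw [Finset.card_image_of_injective _ hAinj, Finset.card_univ, ZMod.card]
  · intro s hs
    obtain ⟨x, _, rfl⟩ := Finset.mem_image.mp hs
    exact hA1 x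
  · intro n
    rw [repCount]
    have hsub : (reps (↑(Finset.image A Finset.univ) : Set ℕ) h n).Subsingleton := by
      rintro f ⟨hfm, hfS, hfs⟩ f' ⟨hf'm, hf'S, hf's⟩
      -- pick preimages
      have hc : ∀ i, ∃ x : ZMod p, A x = f i := by
        intro i
        have := hfS i
        simp only [Finset.coe_image, Set.mem_image, Finset.coe_univ, Set.mem_univ,
          true_and] at this
        exact this
      have hd : ∀ i, ∃ x : ZMod p, A x = f' i := by
        intro i
        have := hf'S i
        simp only [Finset.coe_image, Set.mem_image, Finset.coe_univ, Set.mem_univ,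
          true_and] at this
        exact this
      choose c hcA using hc
      choose d hdA using hd
      -- product identity
      have key : ∏ i, (θ + algebraMap (ZMod p) F (c i)) =
          ∏ i, (θ + algebraMap (ZMod p) F (d i)) := by
        have e1 : ∏ i, (θ + algebraMap (ZMod p) F (c i)) = θ ^ n := by
          rw [← hfs, ← Finset.prod_pow_eq_pow_sum]
          exact Finset.prod_congr rfl fun i _ => by rw [hA2 (c i), hcA i]
        have e2 : ∏ i, (θ + algebraMap (ZMod p) F (d i)) = θ ^ n := by
          rw [← hf's, ← Finset.prod_pow_eq_pow_sum]
          exact Finset.prod_congr rfl fun i _ => by rw [hA2 (d i), hdA i]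
        rw [e1, e2]
      -- polynomial identity
      set P : Polynomial (ZMod p) := ∏ i, (X - C (-(c i))) with hP
      set Q : Polynomial (ZMod p) := ∏ i, (X - C (-(d i))) with hQ
      have hPm : P.Monic := monic_prod_of_monic _ _ fun i _ => monic_X_sub_C _
      have hQm : Q.Monic := monic_prod_of_monic _ _ fun i _ => monic_X_sub_C _
      have hPd : P.natDegree = h := by
        rw [hP, natDegree_prod _ _ fun i _ => X_sub_C_ne_zero _]
        simp
      have hQd : Q.natDegree = h := by
        rw [hQ, natDegree_prod _ _ fun i _ => X_sub_C_ne_zero _]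
        simp
      have haevalP : aeval θ P = ∏ i, (θ + algebraMap (ZMod p) F (c i)) := by
        rw [hP, map_prod]
        exact Finset.prod_congr rfl fun i _ => by simp [sub_neg_eq_add]
      have haevalQ : aeval θ Q = ∏ i, (θ + algebraMap (ZMod p) F (d i)) := by
        rw [hQ, map_prod]
        exact Finset.prod_congr rfl fun i _ => by simp [sub_neg_eq_add]
      have hPQ : P = Q := by
        by_contra hne
        have hsub' : P - Q ≠ 0 := sub_ne_zero_of_ne hne
        have hdeg : (P - Q).degree < P.degree := by
          refine degree_sub_lt ?_ hPm.ne_zero ?_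
          · rw [degree_eq_natDegree hPm.ne_zero, degree_eq_natDegree hQm.ne_zero, hPd, hQd]
          · rw [hPm.leadingCoeff, hQm.leadingCoeff]
        have hdeg' : (P - Q).natDegree < h := by
          rw [Polynomial.natDegree_lt_iff_degree_lt hsub']
          rw [degree_eq_natDegree hPm.ne_zero, hPd] at hdeg
          exact_mod_cast hdeg
        have hzero := vanish (P - Q) hdeg'
          (by rw [map_sub, haevalP, haevalQ, key, sub_self])
        exact hsub' hzero
      -- multiset identity
      have hmult : Finset.univ.val.map c = Finset.univ.val.map d := by
        have h1 : P.roots = Finset.univ.val.map (fun i => -(c i)) := by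
          rw [hP, ← Polynomial.roots_multiset_prod_X_sub_C (Finset.univ.val.map fun i => -(c i))]
          congr 1
          rw [Multiset.map_map, Finset.prod_eq_multiset_prod]
          rfl
        have h2 : Q.roots = Finset.univ.val.map (fun i => -(d i)) := by
          rw [hQ, ← Polynomial.roots_multiset_prod_X_sub_C (Finset.univ.val.map fun i => -(d i))]
          congr 1
          rw [Multiset.map_map, Finset.prod_eq_multiset_prod]
          rfl
        have h3 : Finset.univ.val.map (fun i => -(c i)) = Finset.univ.val.map (fun i => -(d i)) := by
          rw [← h1, ← h2, hPQ]
        have := congrArg (Multiset.map (fun x : ZMod p => -x)) h3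
        simpa only [Multiset.map_map, Function.comp, neg_neg] using this
      -- values multiset identity
      have hvals : Finset.univ.val.map f = Finset.univ.val.map f' := by
        have h4 := congrArg (Multiset.map A) hmult
        rw [Multiset.map_map, Multiset.map_map] at h4
        calc Finset.univ.val.map f = Finset.univ.val.map (A ∘ c) :=
              (Multiset.map_congr rfl fun i _ => (hcA i).symm)
          _ = Finset.univ.val.map (A ∘ d) := h4
          _ = Finset.univ.val.map f' := Multiset.map_congr rfl fun i _ => hdA i
      -- sorted lists
      have hlist : List.ofFn f = List.ofFn f' := by
        rw [Fin.univ_val_map, Fin.univ_val_map] at hvals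
        have hperm : (List.ofFn f).Perm (List.ofFn f') := Multiset.coe_eq_coe.mp hvals
        exact List.Perm.eq_of_sortedLE hfm.sortedLE_ofFn hf'm.sortedLE_ofFn hperm
      exact List.ofFn_injective hlist
    rcases (reps (↑(Finset.image A Finset.univ) : Set ℕ) h n).eq_empty_or_nonempty with he | ⟨f0, hf0⟩
    · rw [he]; simp
    · have : reps (↑(Finset.image A Finset.univ) : Set ℕ) h n ⊆ {f0} := fun x hx => hsub hx hf0
      calc (reps _ h n).ncard ≤ ({f0} : Set (Fin h → ℕ)).ncard :=
            Set.ncard_le_ncard this (Set.finite_singleton _)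
        _ = 1 := Set.ncard_singleton _
end

section
/- For every integer h ≥ 2 and every real q ≥ 2·(2h)^{1/h} (in particular whenever q ≥ e²), there exists a B_h[1] set contained in [0, q/h) with more than (1/2)·(q/h)^{1/h} elements. -/
open Polynomial

lemma subsingleton_ncard_le_one {α : Type*} {s : Set α} (hs : s.Subsingleton) :
    s.ncard ≤ 1 := by
  rcases hs.eq_empty_or_singleton with h | ⟨a, ha⟩
  · simp [h]
  · simp [ha]

lemma isBhg_of_unique_rep {A : Set ℕ} {h : ℕ}
    (H : ∀ n, ∀ f g : Fin h → ℕ, f ∈ reps A h n → g ∈ reps A h n → f = g) :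
    IsBhg A h 1 := fun n => subsingleton_ncard_le_one (fun f hf g hg => H n f g hf hg)

lemma mono_eq_of_map_eq {h : ℕ} {f g : Fin h → ℕ} (hf : Monotone f) (hg : Monotone g)
    (hm : Finset.univ.val.map f = Finset.univ.val.map g) : f = g := by
  have : (List.ofFn f : Multiset ℕ) = (List.ofFn g : Multiset ℕ) := by
    rw [List.ofFn_eq_map, List.ofFn_eq_map]
    simpa [Finset.univ, Fintype.elems] using hm
  rw [Multiset.coe_eq_coe] at this
  exact List.ofFn_inj.mp (this.eq_of_sortedLE hf.sortedLE_ofFn hg.sortedLE_ofFn)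

lemma multiset_eq_of_prod_linear_eq {F : Type*} [Field F] {h : ℕ} {c d : Fin h → F}
    (heq : (∏ i, (X + C (c i))) = ∏ i, (X + C (d i))) :
    Finset.univ.val.map c = Finset.univ.val.map d := by
  have key : ∀ e : Fin h → F, (∏ i, (X + C (e i))) =
      (((Finset.univ.val.map e).map (fun a => -a)).map (fun a => X - C a)).prod := by
    intro e
    rw [Multiset.map_map, Multiset.map_map, Finset.prod]
    exact congrArg Multiset.prod (Multiset.map_congr rfl (fun i _ => by simp [sub_neg_eq_add]))
  rw [key c, key d] at heq
  have h3 := congrArg Polynomial.roots heq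
  rw [roots_multiset_prod_X_sub_C, roots_multiset_prod_X_sub_C] at h3
  exact Multiset.map_injective neg_injective h3

lemma bose_chowla (p h : ℕ) [Fact p.Prime] (hh : 2 ≤ h) :
    ∃ S : Finset ℕ, S.card = p ∧ (∀ s ∈ S, s < p ^ h - 1) ∧ IsBhg (↑S : Set ℕ) h 1 := by
  classical
  have hp2 : 2 ≤ p := (Fact.out : p.Prime).two_le
  have h0 : h ≠ 0 := by omega
  have hpph : p < p ^ h := by
    calc p = p ^ 1 := (pow_one p).symm
    _ < p ^ h := Nat.pow_lt_pow_right (by omega) (by omega)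
  have hord_pos : 0 < p ^ h - 1 := by omega
  let K := GaloisField p h
  haveI : Fintype K := Fintype.ofFinite K
  haveI : Fintype Kˣ := Fintype.ofFinite _
  obtain ⟨ζ, hζ⟩ := IsCyclic.exists_generator (α := Kˣ)
  have hord : orderOf ζ = p ^ h - 1 := by
    rw [orderOf_eq_card_of_forall_mem_zpowers hζ, Nat.card_units, GaloisField.card p h h0]
  set θ : K := (ζ : K) with hθdef
  have hordθ : orderOf θ = p ^ h - 1 := by rw [hθdef, orderOf_units, hord]
  -- θ + c̄ is nonzero
  have hne : ∀ c : ZMod p, θ + algebraMap (ZMod p) K c ≠ 0 := by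
    intro c hc
    have hθ : θ = algebraMap (ZMod p) K (-c) := by rw [map_neg]; linear_combination hc
    have hz : (-c : ZMod p) ≠ 0 := by
      intro h'
      rw [h', map_zero] at hθ
      exact ζ.ne_zero hθ
    have hpow : θ ^ (p - 1) = 1 := by
      rw [hθ, ← map_pow, ZMod.pow_card_sub_one_eq_one hz, map_one]
    have hle := orderOf_le_of_pow_eq_one (n := p - 1) (by omega) hpow
    omega
  -- the discrete-log function
  have hexists : ∀ c : ZMod p, ∃ k : ℕ, k < p ^ h - 1 ∧
      (ζ : K) ^ k = θ + algebraMap (ZMod p) K c := by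
    intro c
    obtain ⟨k, hk⟩ := mem_powers_iff_mem_zpowers.mpr (hζ (Units.mk0 _ (hne c)))
    refine ⟨k % (p ^ h - 1), Nat.mod_lt _ hord_pos, ?_⟩
    have : ζ ^ (k % (p ^ h - 1)) = Units.mk0 _ (hne c) := by
      rw [← hord, pow_mod_orderOf]
      exact hk
    have := congrArg Units.val this
    simpa using this
  choose e he1 he2 using hexists
  have einj : Function.Injective e := by
    intro c d hcd
    have : θ + algebraMap (ZMod p) K c = θ + algebraMap (ZMod p) K d := by
      rw [← he2 c, ← he2 d, hcd]
    have := add_left_cancel this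
    exact (algebraMap (ZMod p) K).injective this
  -- minpoly degree
  have htop : IntermediateField.adjoin (ZMod p) {θ} = ⊤ := by
    rw [eq_top_iff]
    intro x _
    by_cases hx : x = 0
    · rw [hx]; exact zero_mem _
    · obtain ⟨m, hm⟩ := mem_powers_iff_mem_zpowers.mpr (hζ (Units.mk0 x hx))
      have : x = θ ^ m := by
        have := congrArg (Units.val) hm
        simpa [hθdef] using this.symm
      rw [this]
      exact pow_mem (IntermediateField.mem_adjoin_simple_self (ZMod p) θ) m
  have hint : IsIntegral (ZMod p) θ := .of_finite _ _
  have hdeg : (minpoly (ZMod p) θ).natDegree = h := by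
    rw [← IntermediateField.adjoin.finrank hint]
    show Module.finrank (ZMod p) (IntermediateField.adjoin (ZMod p) {θ}) = h
    rw [htop, IntermediateField.finrank_top', GaloisField.finrank p h0]
  -- the set
  haveI : NeZero p := ⟨by omega⟩
  refine ⟨Finset.image e Finset.univ, ?_, ?_, ?_⟩
  · rw [Finset.card_image_of_injective _ einj, Finset.card_univ, ZMod.card]
  · intro s hs
    obtain ⟨c, _, rfl⟩ := Finset.mem_image.mp hs
    exact he1 c
  -- B_h[1]
  apply isBhg_of_unique_rep
  rintro n f g ⟨hfm, hfA, hfs⟩ ⟨hgm, hgA, hgs⟩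
  have hch : ∀ (f' : Fin h → ℕ), (∀ i, f' i ∈ (↑(Finset.image e Finset.univ) : Set ℕ)) →
      ∃ c : Fin h → ZMod p, ∀ i, e (c i) = f' i := by
    intro f' hf'
    have : ∀ i, ∃ c : ZMod p, e c = f' i := by
      intro i
      obtain ⟨c, _, hc⟩ := Finset.mem_image.mp (by exact_mod_cast hf' i)
      exact ⟨c, hc⟩
    exact ⟨fun i => (this i).choose, fun i => (this i).choose_spec⟩
  obtain ⟨cf, hcf⟩ := hch f hfA
  obtain ⟨cg, hcg⟩ := hch g hgA
  -- products in K agree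
  have hprod : (∏ i, (θ + algebraMap (ZMod p) K (cf i))) =
      ∏ i, (θ + algebraMap (ZMod p) K (cg i)) := by
    have l1 : ∀ (c' : Fin h → ZMod p) (f' : Fin h → ℕ), (∀ i, e (c' i) = f' i) →
        (∑ i, f' i = n) → (∏ i, (θ + algebraMap (ZMod p) K (c' i))) = (ζ : K) ^ n := by
      intro c' f' hc' hsum
      calc (∏ i, (θ + algebraMap (ZMod p) K (c' i)))
          = ∏ i, (ζ : K) ^ (f' i) := by
            refine Finset.prod_congr rfl (fun i _ => ?_)
            rw [← hc' i, he2 (c' i)]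
        _ = (ζ : K) ^ (∑ i, f' i) := Finset.prod_pow_eq_pow_sum _ _ _
        _ = (ζ : K) ^ n := by rw [hsum]
    rw [l1 cf f hcf hfs, l1 cg g hcg hgs]
  -- polynomial identity
  have hpoly : (∏ i, (X + C (cf i))) = ∏ i, (X + C (cg i)) := by
    set P : (ZMod p)[X] := ∏ i, (X + C (cf i)) with hP
    set Q : (ZMod p)[X] := ∏ i, (X + C (cg i)) with hQ
    have haev : ∀ (c' : Fin h → ZMod p),
        aeval θ (∏ i, (X + C (c' i))) = ∏ i, (θ + algebraMap (ZMod p) K (c' i)) := by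
      intro c'
      rw [map_prod]
      exact Finset.prod_congr rfl (fun i _ => by simp)
    have hmonic : ∀ (c' : Fin h → ZMod p), (∏ i, (X + C (c' i))).Monic :=
      fun c' => monic_prod_of_monic _ _ (fun i _ => monic_X_add_C (c' i))
    have hndeg : ∀ (c' : Fin h → ZMod p), (∏ i, (X + C (c' i))).natDegree = h := by
      intro c'
      rw [natDegree_prod _ _ (fun i _ => (monic_X_add_C (c' i)).ne_zero)]
      simp
    by_contra hne'
    have hR0 : P - Q ≠ 0 := sub_ne_zero.mpr hne'
    have hroot : aeval θ (P - Q) = 0 := by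
      rw [map_sub, haev cf, haev cg, hprod, sub_self]
    have hdvd := minpoly.dvd (ZMod p) θ hroot
    have h1 : (minpoly (ZMod p) θ).natDegree ≤ (P - Q).natDegree :=
      natDegree_le_of_dvd hdvd hR0
    have h2 : (P - Q).natDegree < P.natDegree := by
      apply natDegree_lt_natDegree hR0
      apply degree_sub_lt
      · rw [degree_eq_natDegree (hmonic cf).ne_zero, degree_eq_natDegree (hmonic cg).ne_zero,
          hndeg cf, hndeg cg]
      · exact (hmonic cf).ne_zero
      · rw [(hmonic cf).leadingCoeff, (hmonic cg).leadingCoeff]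
    rw [hdeg] at h1
    rw [hndeg cf] at h2
    omega
  have hmm := multiset_eq_of_prod_linear_eq hpoly
  have : Finset.univ.val.map f = Finset.univ.val.map g := by
    have := congrArg (Multiset.map e) hmm
    rw [Multiset.map_map, Multiset.map_map] at this
    calc Finset.univ.val.map f = Finset.univ.val.map (e ∘ cf) := by
          exact Multiset.map_congr rfl (fun i _ => (hcf i).symm)
      _ = Finset.univ.val.map (e ∘ cg) := this
      _ = Finset.univ.val.map g := Multiset.map_congr rfl (fun i _ => hcg i)
  exact mono_eq_of_map_eq hfm hgm this

lemma isBhg_singleton (h : ℕ) : IsBhg (↑({0} : Finset ℕ) : Set ℕ) h 1 := by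
  apply isBhg_of_unique_rep
  rintro n f g ⟨-, hfA, -⟩ ⟨-, hgA, -⟩
  funext i
  have h1 := hfA i
  have h2 := hgA i
  simp only [Finset.coe_singleton, Set.mem_singleton_iff] at h1 h2
  rw [h1, h2]

/-- For `h ≥ 2` and real `q ≥ 2·(2h)^{1/h}` there is a `B_h[1]` set contained in
`[0, q/h)` with more than `(1/2)·(q/h)^{1/h}` elements. -/
theorem stmt8 (h : ℕ) (hh : 2 ≤ h) (q : ℝ)
    (hq : 2 * ((2 * h : ℝ)) ^ ((1 : ℝ) / h) ≤ q) :
    ∃ S : Finset ℕ, (∀ s ∈ S, (s : ℝ) < q / h) ∧ IsBhg (↑S : Set ℕ) h 1 ∧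
      (1 / 2 : ℝ) * (q / h) ^ ((1 : ℝ) / h) < S.card := by
  have hh0 : (0:ℝ) < h := by positivity
  have hq0 : (0:ℝ) < q := by
    refine lt_of_lt_of_le ?_ hq
    have : (0:ℝ) < (2 * h : ℝ) ^ ((1 : ℝ) / h) := Real.rpow_pos_of_pos (by positivity) _
    linarith
  have hN : (0:ℝ) < q / h := div_pos hq0 hh0
  set x : ℝ := (1 / 2 : ℝ) * (q / h) ^ ((1 : ℝ) / h) with hxdef
  have hpow : ((q / h) ^ ((1:ℝ)/h)) ^ (h:ℕ) = q / h := by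
    rw [← Real.rpow_natCast ((q/h) ^ ((1:ℝ)/h)) h, ← Real.rpow_mul hN.le,
      one_div, inv_mul_cancel₀ (by positivity), Real.rpow_one]
  by_cases hx : x < 1
  · refine ⟨{0}, ?_, isBhg_singleton h, ?_⟩
    · intro s hs
      rw [Finset.mem_singleton] at hs
      subst hs
      simpa using hN
    · simpa using hx
  · push_neg at hx
    have hm0 : ⌊x⌋₊ ≠ 0 := by
      have := Nat.floor_pos.mpr hx
      omega
    obtain ⟨P, hP, h1, h2⟩ := Nat.exists_prime_lt_and_le_two_mul ⌊x⌋₊ hm0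
    haveI : Fact P.Prime := ⟨hP⟩
    obtain ⟨S, hcard, hbound, hbh⟩ := bose_chowla P h hh
    have hPx : x < (P : ℝ) := by
      calc x < (⌊x⌋₊ : ℝ) + 1 := Nat.lt_floor_add_one x
        _ ≤ (P : ℝ) := by exact_mod_cast Nat.succ_le_of_lt h1
    have hP2x : (P : ℝ) ≤ 2 * x := by
      calc (P : ℝ) ≤ 2 * (⌊x⌋₊ : ℝ) := by exact_mod_cast h2
        _ ≤ 2 * x := by
            have := Nat.floor_le (by linarith : (0:ℝ) ≤ x)
            linarith
    have h2x : 2 * x = (q / h) ^ ((1:ℝ)/h) := by rw [hxdef]; ring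
    refine ⟨S, ?_, hbh, ?_⟩
    · intro s hs
      have hs' : s < P ^ h := by
        have := hbound s hs
        omega
      calc (s : ℝ) < (P : ℝ) ^ (h:ℕ) := by exact_mod_cast hs'
        _ ≤ (2 * x) ^ (h:ℕ) := by
            apply pow_le_pow_left₀ (by positivity) hP2x
        _ = q / h := by rw [h2x, hpow]
    · rw [hcard]
      exact hPx
end

section
/- Let 0 < α < 1 and let A be a random set in S(α, m). Then for every h ≥ 2 and every positive integer n, the expected number of representations of n as a sum of h nondecreasing elements of A satisfies E[r_{h,A}(n)] ≤ C_{h,α} · n^{h(1−α)−1}, where C_{h,α} depends only on h and α. -/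
open MeasureTheory ProbabilityTheory

/-- Downward induction on `Fin h`. -/
lemma finRevInduction {h : ℕ} (hp : 0 < h) (P : Fin h → Prop)
    (hlast : P ⟨h - 1, Nat.sub_lt hp Nat.one_pos⟩)
    (hstep : ∀ i : Fin h, ∀ hi : (i : ℕ) + 1 < h, P ⟨(i : ℕ) + 1, hi⟩ → P i) :
    ∀ i, P i := by
  have H : ∀ k, ∀ i : Fin h, h - 1 - (i : ℕ) ≤ k → P i := by
    intro k
    induction k with
    | zero =>
      intro i hi
      have hlt := i.isLt
      have hv : (i : ℕ) = h - 1 := by omega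
      have : i = ⟨h - 1, Nat.sub_lt hp Nat.one_pos⟩ := Fin.ext (by simpa using hv)
      rw [this]; exact hlast
    | succ k ih =>
      intro i hi
      by_cases hc : (i : ℕ) = h - 1
      · have : i = ⟨h - 1, Nat.sub_lt hp Nat.one_pos⟩ := Fin.ext (by simpa using hc)
        rw [this]; exact hlast
      · have hlt := i.isLt
        have hi1 : (i : ℕ) + 1 < h := by omega
        exact hstep i hi1 (ih ⟨(i : ℕ) + 1, hi1⟩ (by simp; omega))
  exact fun i => H _ i le_rfl

/-- Every value of a monotone tuple equals the last value or the value at a "jump" index. -/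
lemma jumpChain {h : ℕ} (hp : 0 < h) (f : Fin h → ℕ) (hf : Monotone f) (i : Fin h) :
    f i = f ⟨h - 1, Nat.sub_lt hp Nat.one_pos⟩ ∨
      ∃ j : Fin h, (∃ hj : (j : ℕ) + 1 < h, f j < f ⟨(j : ℕ) + 1, hj⟩) ∧ f j = f i := by
  refine finRevInduction hp
    (fun i => f i = f ⟨h - 1, Nat.sub_lt hp Nat.one_pos⟩ ∨
      ∃ j : Fin h, (∃ hj : (j : ℕ) + 1 < h, f j < f ⟨(j : ℕ) + 1, hj⟩) ∧ f j = f i)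
    (Or.inl rfl) ?_ i
  intro i hi IH
  by_cases hj : f i < f ⟨(i : ℕ) + 1, hi⟩
  · exact Or.inr ⟨i, ⟨hi, hj⟩, rfl⟩
  · have heq : f i = f ⟨(i : ℕ) + 1, hi⟩ :=
      le_antisymm (hf (by simp [Fin.le_def])) (not_lt.1 hj)
    rcases IH with h1 | ⟨j, hj', hje⟩
    · exact Or.inl (heq.trans h1)
    · exact Or.inr ⟨j, hj', hje.trans heq.symm⟩

/-- Monotone tuples with a fixed sum are determined by their jump set and jump values. -/
lemma jumpInj {h n : ℕ} (hp : 0 < h) {f g : Fin h → ℕ} (hf : Monotone f) (hg : Monotone g)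
    (hsf : ∑ i, f i = n) (hsg : ∑ i, g i = n)
    (hJ : ∀ i : Fin h, (∃ hi : (i : ℕ) + 1 < h, f i < f ⟨(i : ℕ) + 1, hi⟩) ↔
      (∃ hi : (i : ℕ) + 1 < h, g i < g ⟨(i : ℕ) + 1, hi⟩))
    (hv : ∀ i : Fin h, (∃ hi : (i : ℕ) + 1 < h, f i < f ⟨(i : ℕ) + 1, hi⟩) → f i = g i) :
    f = g := by
  set last : Fin h := ⟨h - 1, Nat.sub_lt hp Nat.one_pos⟩ with hlastdef
  have Q : ∀ i, f i = g i ∨ (f i = f last ∧ g i = g last) := by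
    refine finRevInduction hp _ (Or.inr ⟨rfl, rfl⟩) ?_
    intro i hi IH
    by_cases hjump : ∃ hi' : (i : ℕ) + 1 < h, f i < f ⟨(i : ℕ) + 1, hi'⟩
    · exact Or.inl (hv i hjump)
    · have hgj : ¬ ∃ hi' : (i : ℕ) + 1 < h, g i < g ⟨(i : ℕ) + 1, hi'⟩ := fun hx => hjump ((hJ i).2 hx)
      have heqf : f i = f ⟨(i : ℕ) + 1, hi⟩ := by
        refine le_antisymm (hf (by simp [Fin.le_def])) (not_lt.1 ?_)
        exact fun hx => hjump ⟨hi, hx⟩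
      have heqg : g i = g ⟨(i : ℕ) + 1, hi⟩ := by
        refine le_antisymm (hg (by simp [Fin.le_def])) (not_lt.1 ?_)
        exact fun hx => hgj ⟨hi, hx⟩
      rcases IH with h1 | ⟨h1, h2⟩
      · exact Or.inl (by rw [heqf, heqg, h1])
      · exact Or.inr ⟨by rw [heqf, h1], by rw [heqg, h2]⟩
  rcases lt_trichotomy (f last) (g last) with hlt | heq | hgt
  · exfalso
    have hle : ∀ i, f i ≤ g i := by
      intro i
      rcases Q i with h1 | ⟨h1, h2⟩
      · exact h1.le
      · rw [h1, h2]; exact hlt.le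
    have : (∑ i, f i) < ∑ i, g i :=
      Finset.sum_lt_sum (fun i _ => hle i) ⟨last, Finset.mem_univ _, hlt⟩
    omega
  · funext i
    rcases Q i with h1 | ⟨h1, h2⟩
    · exact h1
    · rw [h1, h2, heq]
  · exfalso
    have hle : ∀ i, g i ≤ f i := by
      intro i
      rcases Q i with h1 | ⟨h1, h2⟩
      · exact h1.ge
      · rw [h1, h2]; exact hgt.le
    have : (∑ i, g i) < ∑ i, f i :=
      Finset.sum_lt_sum (fun i _ => hle i) ⟨last, Finset.mem_univ _, hgt⟩
    omega

/-- Elementary bound `∑_{a ≤ n} a^{-α} ≤ 1 + n^{1-α}/(1-α)`. -/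
lemma sumRpowLe {α : ℝ} (hα0 : 0 < α) (hα1 : α < 1) (n : ℕ) :
    ∑ a ∈ Finset.range (n + 1), (a : ℝ) ^ (-α) ≤ 1 + (n : ℝ) ^ (1 - α) / (1 - α) := by
  have h1α : (0 : ℝ) < 1 - α := by linarith
  induction n with
  | zero =>
    simp [Real.zero_rpow (ne_of_gt h1α), Real.zero_rpow (neg_ne_zero.mpr hα0.ne')]
  | succ n ih =>
    rw [Finset.sum_range_succ]
    push_cast
    set N : ℝ := (n : ℝ) + 1 with hN
    have hNpos : (0 : ℝ) < N := by positivity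
    have hNne : N ≠ 0 := hNpos.ne'
    have key : (n : ℝ) ^ (1 - α) + (1 - α) * N ^ (-α) ≤ N ^ (1 - α) := by
      have ht : (0 : ℝ) ≤ (n : ℝ) / N := by positivity
      have hamgm := Real.geom_mean_le_arith_mean2_weighted (le_of_lt h1α) hα0.le ht
        (le_of_lt one_pos) (by ring)
      simp only [Real.one_rpow, mul_one] at hamgm
      have hmul := mul_le_mul_of_nonneg_right hamgm (Real.rpow_nonneg hNpos.le (1 - α))
      have hleft : ((n : ℝ) / N) ^ (1 - α) * N ^ (1 - α) = (n : ℝ) ^ (1 - α) := by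
        rw [← Real.mul_rpow ht hNpos.le, div_mul_cancel₀]
        exact hNne
      have hpow : N ^ (1 - α) = N ^ (-α) * N := by
        rw [← Real.rpow_add_one hNne (-α)]; ring_nf
      have hsplit : ((1 - α) * ((n : ℝ) / N) + α) * N ^ (1 - α)
          = (1 - α) * (n : ℝ) * N ^ (-α) + α * N ^ (1 - α) := by
        rw [hpow]; field_simp
      rw [hleft, hsplit] at hmul
      have hexp : N ^ (1 - α) = N ^ (-α) * (n : ℝ) + N ^ (-α) := by
        rw [hpow, hN]; ring
      have hfin : (1 - α) * (n : ℝ) * N ^ (-α) + α * N ^ (1 - α)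
          = N ^ (1 - α) - (1 - α) * N ^ (-α) := by
        rw [hexp]; ring
      linarith [hmul, hfin]
    have h2 : (n : ℝ) ^ (1 - α) / (1 - α) + N ^ (-α) ≤ N ^ (1 - α) / (1 - α) := by
      rw [← sub_nonneg]
      have hrew : N ^ (1 - α) / (1 - α) - ((n : ℝ) ^ (1 - α) / (1 - α) + N ^ (-α))
          = (N ^ (1 - α) - (n : ℝ) ^ (1 - α) - (1 - α) * N ^ (-α)) / (1 - α) := by
        field_simp
        ring
      rw [hrew]
      exact div_nonneg (by linarith [key]) h1α.le
    linarith [ih, h2]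

/-- For a random set in `S(α, m)`, `E[r_{h,A}(n)] ≤ C_{h,α} · n^{h(1−α)−1}` with a
constant depending only on `h` and `α`. -/
theorem stmt10 (α : ℝ) (hα0 : 0 < α) (hα1 : α < 1) (h : ℕ) (hh : 2 ≤ h) :
    ∃ C : ℝ, 0 < C ∧
      ∀ (m : ℕ), 1 ≤ m →
      ∀ (Ω : Type) (_ : MeasurableSpace Ω) (μ : Measure Ω), IsProbabilityMeasure μ →
      ∀ (A : Ω → Set ℕ),
        (∀ n, MeasurableSet {ω | n ∈ A ω}) →
        iIndepSet (fun n => {ω | n ∈ A ω}) μ →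
        (∀ n, m ≤ n → μ {ω | n ∈ A ω} = ENNReal.ofReal ((n : ℝ) ^ (-α))) →
        (∀ n, n < m → μ {ω | n ∈ A ω} = 0) →
        ∀ n : ℕ, 1 ≤ n →
          ∫ ω, (repCount (A ω) h n : ℝ) ∂μ ≤ C * (n : ℝ) ^ (h * (1 - α) - 1) := by
  classical
  have h1α : (0 : ℝ) < 1 - α := by linarith
  have hhpos : 0 < h := by omega
  have hhR : (0 : ℝ) < (h : ℝ) := by exact_mod_cast hhpos
  set B : ℝ := 1 + 1 / (1 - α) with hBdef
  have hc1 : (0 : ℝ) < 1 / (1 - α) := by positivity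
  have hB1 : (1 : ℝ) ≤ B := by rw [hBdef]; linarith
  have hBpos : (0 : ℝ) < B := lt_of_lt_of_le one_pos hB1
  refine ⟨(h : ℝ) ^ α * 2 ^ (h - 1) * B ^ (h - 1), by positivity, ?_⟩
  intro m hm Ω mΩ
  letI : MeasurableSpace Ω := mΩ
  intro μ hprob A hmeas hindep hμ1 hμ2 n hn
  have hnR : (0 : ℝ) < (n : ℝ) := by
    have : (1 : ℝ) ≤ (n : ℝ) := by exact_mod_cast hn
    linarith
  set last : Fin h := ⟨h - 1, Nat.sub_lt hhpos Nat.one_pos⟩ with hlastdef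
  set Jf : (Fin h → ℕ) → Finset (Fin h) :=
    fun f => Finset.univ.filter
      (fun i => ∃ hi : (i : ℕ) + 1 < h, f i < f ⟨(i : ℕ) + 1, hi⟩) with hJfdef
  set T : Finset (Fin h → ℕ) :=
    (Fintype.piFinset fun _ : Fin h => Finset.range (n + 1)).filter
      (fun f => Monotone f ∧ ∑ i, f i = n) with hTdef
  have hJmem : ∀ (f : Fin h → ℕ) (i : Fin h),
      i ∈ Jf f ↔ ∃ hi : (i : ℕ) + 1 < h, f i < f ⟨(i : ℕ) + 1, hi⟩ := by
    intro f i; rw [hJfdef]; simp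
  have hmemT : ∀ f ∈ T, Monotone f ∧ (∑ i, f i) = n := by
    intro f hf
    exact (Finset.mem_filter.1 hf).2
  have hEmeas : ∀ f : Fin h → ℕ, MeasurableSet {ω | ∀ i, f i ∈ A ω} := by
    intro f
    have hEq : {ω | ∀ i, f i ∈ A ω} = ⋂ i, {ω | f i ∈ A ω} := by ext ω; simp
    rw [hEq]; exact MeasurableSet.iInter fun i => hmeas _
  -- counting
  have hrep : ∀ ω, reps (A ω) h n = ↑(T.filter fun f => ∀ i, f i ∈ A ω) := by
    intro ω
    ext f
    simp only [reps, Set.mem_setOf_eq, Finset.coe_filter, hTdef, Finset.mem_filter,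
      Fintype.mem_piFinset, Finset.mem_range]
    constructor
    · rintro ⟨hmono, hmem, hsum⟩
      refine ⟨⟨fun i => ?_, hmono, hsum⟩, hmem⟩
      have := Finset.single_le_sum (f := f) (fun j _ => Nat.zero_le _) (Finset.mem_univ i)
      omega
    · rintro ⟨⟨_, hmono, hsum⟩, hmem⟩
      exact ⟨hmono, hmem, hsum⟩
  have hcount : ∀ ω, (repCount (A ω) h n : ℝ) =
      ∑ f ∈ T, Set.indicator {ω' | ∀ i, f i ∈ A ω'} (fun _ => (1 : ℝ)) ω := by
    intro ω
    rw [repCount, hrep ω, Set.ncard_coe_finset, Finset.card_filter]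
    push_cast
    refine Finset.sum_congr rfl fun f _ => ?_
    rw [Set.indicator_apply]
    simp only [Set.mem_setOf_eq]
  have hint : ∫ ω, (repCount (A ω) h n : ℝ) ∂μ
      = ∑ f ∈ T, (μ {ω' | ∀ i, f i ∈ A ω'}).toReal := by
    calc ∫ ω, (repCount (A ω) h n : ℝ) ∂μ
        = ∫ ω, ∑ f ∈ T, Set.indicator {ω' | ∀ i, f i ∈ A ω'} (fun _ => (1 : ℝ)) ω ∂μ := by
          simp_rw [hcount]
      _ = ∑ f ∈ T, ∫ ω, Set.indicator {ω' | ∀ i, f i ∈ A ω'} (fun _ => (1 : ℝ)) ω ∂μ :=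
          integral_finset_sum T fun f _ => (integrable_const (1 : ℝ)).indicator (hEmeas f)
      _ = ∑ f ∈ T, (μ {ω' | ∀ i, f i ∈ A ω'}).toReal := by
          refine Finset.sum_congr rfl fun f _ => ?_
          rw [MeasureTheory.integral_indicator_const (1 : ℝ) (hEmeas f), smul_eq_mul, mul_one]; rfl
  -- basic bounds
  have hμle : ∀ x : ℕ, (μ {ω' | x ∈ A ω'}).toReal ≤ (x : ℝ) ^ (-α) := by
    intro x
    rcases le_or_gt m x with hx | hx
    · rw [hμ1 x hx, ENNReal.toReal_ofReal (Real.rpow_nonneg (Nat.cast_nonneg x) _)]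
    · rw [hμ2 x hx]
      simpa using Real.rpow_nonneg (Nat.cast_nonneg x) (-α)
  have hle_last : ∀ f : Fin h → ℕ, Monotone f → ∀ i, f i ≤ f last := by
    intro f hmono i
    refine hmono ?_
    rw [Fin.le_def]
    have := i.isLt
    simp only [hlastdef]
    omega
  have hjump_lt : ∀ f : Fin h → ℕ, Monotone f → ∀ j ∈ Jf f, ∀ j' : Fin h, j < j' → f j < f j' := by
    intro f hmono j hj j' hlt
    obtain ⟨hj1, hjlt⟩ := (hJmem f j).1 hj
    have hlt' : (j : ℕ) < (j' : ℕ) := hlt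
    calc f j < f ⟨(j : ℕ) + 1, hj1⟩ := hjlt
      _ ≤ f j' := hmono (by rw [Fin.le_def]; simp; omega)
  -- per-tuple bound
  have hbound : ∀ f ∈ T, (μ {ω' | ∀ i, f i ∈ A ω'}).toReal
      ≤ (h : ℝ) ^ α * (n : ℝ) ^ (-α) * ∏ i ∈ Jf f, ((f i : ℝ)) ^ (-α) := by
    intro f hfT
    obtain ⟨hmono, hsum⟩ := hmemT f hfT
    have hE : {ω' | ∀ i, f i ∈ A ω'} = ⋂ x ∈ Finset.image f Finset.univ, {ω' | x ∈ A ω'} := by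
      ext ω'
      simp only [Set.mem_setOf_eq, Set.mem_iInter, Finset.mem_image, Finset.mem_univ, true_and]
      constructor
      · rintro hall x ⟨i, rfl⟩
        exact hall i
      · intro hall i
        exact hall (f i) ⟨i, rfl⟩
    rw [hE, hindep.meas_biInter, ENNReal.toReal_prod]
    have hSeq : Finset.image f Finset.univ = insert (f last) ((Jf f).image f) := by
      ext x
      simp only [Finset.mem_image, Finset.mem_univ, true_and, Finset.mem_insert]
      constructor
      · rintro ⟨i, rfl⟩
        rcases jumpChain hhpos f hmono i with hc | ⟨j, hj, hje⟩
        · exact Or.inl hc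
        · exact Or.inr ⟨j, (hJmem f j).2 hj, hje⟩
      · rintro (rfl | ⟨j, _, rfl⟩)
        · exact ⟨last, rfl⟩
        · exact ⟨j, rfl⟩
    have hlast_lt : ∀ j ∈ Jf f, j < last := by
      intro j hj
      obtain ⟨hj1, _⟩ := (hJmem f j).1 hj
      rw [Fin.lt_def]
      simp only [hlastdef]
      omega
    have hnotmem : f last ∉ (Jf f).image f := by
      intro hmem
      obtain ⟨j, hj, hje⟩ := Finset.mem_image.1 hmem
      have := hjump_lt f hmono j hj last (hlast_lt j hj)
      omega
    have hinjJ : ∀ x ∈ Jf f, ∀ y ∈ Jf f, f x = f y → x = y := by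
      intro x hx y hy hxy
      rcases lt_trichotomy x y with hlt | heq | hgt
      · exact absurd hxy (ne_of_lt (hjump_lt f hmono x hx y hlt))
      · exact heq
      · exact absurd hxy.symm (ne_of_lt (hjump_lt f hmono y hy x hgt))
    rw [hSeq, Finset.prod_insert hnotmem, Finset.prod_image hinjJ]
    have hlastval : (n : ℝ) / (h : ℝ) ≤ (f last : ℝ) := by
      have hsum_le : n ≤ h * f last := by
        calc n = ∑ i, f i := hsum.symm
          _ ≤ ∑ _i : Fin h, f last := Finset.sum_le_sum fun i _ => hle_last f hmono i
          _ = h * f last := by simp [Finset.sum_const, Finset.card_univ, mul_comm]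
      rw [div_le_iff₀ hhR]
      calc (n : ℝ) ≤ ((h * f last : ℕ) : ℝ) := by exact_mod_cast hsum_le
        _ = (f last : ℝ) * (h : ℝ) := by push_cast; ring
    have hlast_bound : (μ {ω' | f last ∈ A ω'}).toReal ≤ (h : ℝ) ^ α * (n : ℝ) ^ (-α) := by
      calc (μ {ω' | f last ∈ A ω'}).toReal ≤ ((f last : ℕ) : ℝ) ^ (-α) := hμle _
        _ ≤ ((n : ℝ) / (h : ℝ)) ^ (-α) :=
            Real.rpow_le_rpow_of_nonpos (div_pos hnR hhR) hlastval (by linarith)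
        _ = (h : ℝ) ^ α * (n : ℝ) ^ (-α) := by
            rw [Real.div_rpow (Nat.cast_nonneg n) (Nat.cast_nonneg h), div_eq_mul_inv,
              Real.rpow_neg (Nat.cast_nonneg h), inv_inv, mul_comm]
    calc (μ {ω' | f last ∈ A ω'}).toReal * ∏ j ∈ Jf f, (μ {ω' | f j ∈ A ω'}).toReal
        ≤ ((h : ℝ) ^ α * (n : ℝ) ^ (-α)) * ∏ j ∈ Jf f, ((f j : ℝ)) ^ (-α) := by
          apply mul_le_mul hlast_bound
          · exact Finset.prod_le_prod (fun j _ => ENNReal.toReal_nonneg) (fun j _ => hμle _)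
          · exact Finset.prod_nonneg fun j _ => ENNReal.toReal_nonneg
          · positivity
      _ = (h : ℝ) ^ α * (n : ℝ) ^ (-α) * ∏ i ∈ Jf f, ((f i : ℝ)) ^ (-α) := by ring
  -- global combinatorial bound
  set Mx : ℝ := 1 + (n : ℝ) ^ (1 - α) / (1 - α) with hMxdef
  have hMx1 : (1 : ℝ) ≤ Mx := by
    have : 0 ≤ (n : ℝ) ^ (1 - α) / (1 - α) := by positivity
    rw [hMxdef]; linarith
  have hMx0 : (0 : ℝ) ≤ Mx := by linarith
  have hsumw : ∑ f ∈ T, ∏ i ∈ Jf f, ((f i : ℝ)) ^ (-α) ≤ 2 ^ (h - 1) * Mx ^ (h - 1) := by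
    set Φ : (Fin h → ℕ) → Σ _ : Finset (Fin h), Fin h → ℕ :=
      fun f => ⟨Jf f, fun i => if i ∈ Jf f then f i else 0⟩ with hΦdef
    set W : (Σ _ : Finset (Fin h), Fin h → ℕ) → ℝ :=
      fun p => ∏ i ∈ p.1, ((p.2 i : ℝ)) ^ (-α) with hWdef
    have hWnn : ∀ p, 0 ≤ W p :=
      fun p => Finset.prod_nonneg fun i _ => Real.rpow_nonneg (Nat.cast_nonneg _) _
    have hwW : ∀ f, W (Φ f) = ∏ i ∈ Jf f, ((f i : ℝ)) ^ (-α) := by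
      intro f
      simp only [hΦdef, hWdef]
      exact Finset.prod_congr rfl fun i hi => by rw [if_pos hi]
    have hΦinj : ∀ x ∈ T, ∀ y ∈ T, Φ x = Φ y → x = y := by
      intro x hx y hy hxy
      obtain ⟨hmx, hsx⟩ := hmemT x hx
      obtain ⟨hmy, hsy⟩ := hmemT y hy
      have hJeq : Jf x = Jf y := congrArg Sigma.fst hxy
      have hveq : (fun i => if i ∈ Jf x then x i else 0)
          = (fun i => if i ∈ Jf y then y i else 0) := by
        have h2 := (Sigma.mk.inj_iff.1 hxy).2
        exact eq_of_heq h2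
      refine jumpInj hhpos hmx hmy hsx hsy ?_ ?_
      · intro i
        rw [← hJmem x i, ← hJmem y i, hJeq]
      · intro i hi
        have hix : i ∈ Jf x := (hJmem x i).2 hi
        have hiy : i ∈ Jf y := by rw [← hJeq]; exact hix
        have h3 := congrFun hveq i
        rw [if_pos hix, if_pos hiy] at h3
        exact h3
    have hbig : T.image Φ ⊆ ((Finset.univ.erase last).powerset).sigma
        (fun J => Fintype.piFinset fun i => if i ∈ J then Finset.range (n + 1) else {0}) := by
      intro p hp
      obtain ⟨f, hfT, rfl⟩ := Finset.mem_image.1 hp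
      rw [Finset.mem_sigma]
      constructor
      · rw [Finset.mem_powerset]
        intro j hj
        obtain ⟨hj1, _⟩ := (hJmem f j).1 hj
        refine Finset.mem_erase.2 ⟨?_, Finset.mem_univ _⟩
        intro hje
        rw [hje] at hj1
        simp only [hlastdef] at hj1
        omega
      · rw [Fintype.mem_piFinset]
        intro i
        by_cases hi : i ∈ Jf f
        · simp only [hΦdef, if_pos hi]
          have hfT' := Finset.mem_filter.1 hfT
          have := (Fintype.mem_piFinset.1 hfT'.1) i
          simpa using this
        · simp only [hΦdef, if_neg hi]
          simp
    calc ∑ f ∈ T, ∏ i ∈ Jf f, ((f i : ℝ)) ^ (-α)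
        = ∑ f ∈ T, W (Φ f) := Finset.sum_congr rfl fun f _ => (hwW f).symm
      _ = ∑ p ∈ T.image Φ, W p := (Finset.sum_image hΦinj).symm
      _ ≤ ∑ p ∈ ((Finset.univ.erase last).powerset).sigma
            (fun J => Fintype.piFinset fun i => if i ∈ J then Finset.range (n + 1) else {0}),
              W p :=
          Finset.sum_le_sum_of_subset_of_nonneg hbig (fun p _ _ => hWnn p)
      _ = ∑ J ∈ (Finset.univ.erase last).powerset,
            ∑ v ∈ Fintype.piFinset (fun i => if i ∈ J then Finset.range (n + 1) else {0}),
              W ⟨J, v⟩ := Finset.sum_sigma _ _ _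
      _ ≤ ∑ _J ∈ (Finset.univ.erase last).powerset, Mx ^ (h - 1) := by
          apply Finset.sum_le_sum
          intro J hJ
          have hJsub : J ⊆ Finset.univ.erase last := Finset.mem_powerset.1 hJ
          have hlastJ : last ∉ J := fun hl => (Finset.mem_erase.1 (hJsub hl)).1 rfl
          have h1 : ∀ v : Fin h → ℕ, W ⟨J, v⟩
              = ∏ i, (if i ∈ J then ((v i : ℝ)) ^ (-α) else 1) := by
            intro v
            rw [hWdef]
            calc (∏ i ∈ J, ((v i : ℝ)) ^ (-α))
                = ∏ i ∈ J, (if i ∈ J then ((v i : ℝ)) ^ (-α) else 1) :=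
                  Finset.prod_congr rfl fun i hi => (if_pos hi).symm
              _ = ∏ i, (if i ∈ J then ((v i : ℝ)) ^ (-α) else 1) :=
                  Finset.prod_subset (Finset.subset_univ J) (fun x _ hx => if_neg hx)
          have h2 := Finset.prod_univ_sum
            (fun i : Fin h => if i ∈ J then Finset.range (n + 1) else ({0} : Finset ℕ))
            (fun i a => if i ∈ J then ((a : ℝ)) ^ (-α) else 1)
          calc ∑ v ∈ Fintype.piFinset (fun i => if i ∈ J then Finset.range (n + 1) else {0}),
                W ⟨J, v⟩
              = ∑ v ∈ Fintype.piFinset (fun i => if i ∈ J then Finset.range (n + 1) else {0}),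
                ∏ i, (if i ∈ J then ((v i : ℝ)) ^ (-α) else 1) :=
                Finset.sum_congr rfl fun v _ => h1 v
            _ = ∏ i, ∑ a ∈ (if i ∈ J then Finset.range (n + 1) else ({0} : Finset ℕ)),
                  (if i ∈ J then ((a : ℝ)) ^ (-α) else 1) := h2.symm
            _ ≤ Mx ^ (h - 1) := by
                rw [← Finset.mul_prod_erase Finset.univ _ (Finset.mem_univ last)]
                have hlastfac : (∑ a ∈ (if last ∈ J then Finset.range (n + 1)
                    else ({0} : Finset ℕ)), (if last ∈ J then ((a : ℝ)) ^ (-α) else 1)) = 1 := by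
                  simp [hlastJ]
                rw [hlastfac, one_mul]
                calc ∏ i ∈ Finset.univ.erase last,
                      (∑ a ∈ (if i ∈ J then Finset.range (n + 1) else ({0} : Finset ℕ)),
                        (if i ∈ J then ((a : ℝ)) ^ (-α) else 1))
                    ≤ ∏ _i ∈ Finset.univ.erase last, Mx := by
                      apply Finset.prod_le_prod
                      · intro i _
                        by_cases hiJ : i ∈ J
                        · simp only [hiJ, if_true]
                          exact Finset.sum_nonneg fun a _ =>
                            Real.rpow_nonneg (Nat.cast_nonneg a) _
                        · simp [hiJ]
                      · intro i _
                        by_cases hiJ : i ∈ J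
                        · simp only [hiJ, if_true]
                          rw [hMxdef]
                          exact sumRpowLe hα0 hα1 n
                        · simp only [hiJ, if_false]
                          simpa using hMx1
                  _ = Mx ^ (h - 1) := by
                      rw [Finset.prod_const, Finset.card_erase_of_mem (Finset.mem_univ last),
                        Finset.card_univ, Fintype.card_fin]
      _ = 2 ^ (h - 1) * Mx ^ (h - 1) := by
          rw [Finset.sum_const, Finset.card_powerset,
            Finset.card_erase_of_mem (Finset.mem_univ last), Finset.card_univ,
            Fintype.card_fin, nsmul_eq_mul]
          push_cast
          ring
  -- assembly
  rw [hint]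
  have hexp : (n : ℝ) ^ (-α) * ((n : ℝ) ^ (1 - α)) ^ (h - 1)
      = (n : ℝ) ^ ((h : ℝ) * (1 - α) - 1) := by
    rw [← Real.rpow_natCast ((n : ℝ) ^ (1 - α)) (h - 1), ← Real.rpow_mul (Nat.cast_nonneg n),
      ← Real.rpow_add hnR]
    congr 1
    have hcast : ((h - 1 : ℕ) : ℝ) = (h : ℝ) - 1 := by
      have h1 : (1 : ℕ) ≤ h := by omega
      push_cast [Nat.cast_sub h1]
      ring
    rw [hcast]
    ring
  have hMxle : Mx ≤ B * (n : ℝ) ^ (1 - α) := by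
    have hx1 : (1 : ℝ) ≤ (n : ℝ) ^ (1 - α) :=
      Real.one_le_rpow (by exact_mod_cast hn) (by linarith)
    rw [hMxdef, hBdef]
    have hrw : (n : ℝ) ^ (1 - α) / (1 - α) = (1 / (1 - α)) * (n : ℝ) ^ (1 - α) := by ring
    rw [hrw]
    nlinarith [mul_nonneg hc1.le (by linarith : (0:ℝ) ≤ (n : ℝ) ^ (1 - α) - 1)]
  calc ∑ f ∈ T, (μ {ω' | ∀ i, f i ∈ A ω'}).toReal
      ≤ ∑ f ∈ T, (h : ℝ) ^ α * (n : ℝ) ^ (-α) * ∏ i ∈ Jf f, ((f i : ℝ)) ^ (-α) :=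
        Finset.sum_le_sum hbound
    _ = (h : ℝ) ^ α * (n : ℝ) ^ (-α) * ∑ f ∈ T, ∏ i ∈ Jf f, ((f i : ℝ)) ^ (-α) := by
        rw [Finset.mul_sum]
    _ ≤ (h : ℝ) ^ α * (n : ℝ) ^ (-α) * (2 ^ (h - 1) * Mx ^ (h - 1)) := by
        apply mul_le_mul_of_nonneg_left hsumw (by positivity)
    _ ≤ (h : ℝ) ^ α * (n : ℝ) ^ (-α) * (2 ^ (h - 1) * (B * (n : ℝ) ^ (1 - α)) ^ (h - 1)) := by
        apply mul_le_mul_of_nonneg_left _ (by positivity)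
        apply mul_le_mul_of_nonneg_left _ (by positivity)
        exact pow_le_pow_left₀ hMx0 hMxle _
    _ = (h : ℝ) ^ α * 2 ^ (h - 1) * B ^ (h - 1)
          * ((n : ℝ) ^ (-α) * ((n : ℝ) ^ (1 - α)) ^ (h - 1)) := by rw [mul_pow]; ring
    _ = (h : ℝ) ^ α * 2 ^ (h - 1) * B ^ (h - 1) * (n : ℝ) ^ ((h : ℝ) * (1 - α) - 1) := by
        rw [hexp]
end

section
/- Let A be a random set in S(α, m) with 0 < α < 1. For every h ≥ 2, every n, and every s ≥ 1, the probability that n admits s pairwise disjoint representations as a sum of h elements of A is at most E[r_{h,A}(n)]^s, and hence P(r*_{h,A}(n) ≥ s) ≤ C_{h,α,s} · n^{(h(1−α)−1)·s}. -/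
open MeasureTheory ProbabilityTheory

open Finset

lemma esymm_le {ι : Type*} [DecidableEq ι] (q : ι → ℝ) (hq : ∀ i, 0 ≤ q i) (C : Finset ι) :
    ∀ s : ℕ, ∑ S ∈ Finset.powersetCard s C, ∏ f ∈ S, q f ≤ (∑ f ∈ C, q f) ^ s := by
  induction C using Finset.induction with
  | empty =>
    intro s
    cases s with
    | zero => simp
    | succ s =>
      rw [show Finset.powersetCard (s+1) (∅ : Finset ι) = ∅ by
        apply Finset.powersetCard_eq_empty.2; simp]
      simp
  | @insert a C ha ih =>
    intro s
    have hT : (0:ℝ) ≤ ∑ f ∈ C, q f := Finset.sum_nonneg fun i _ => hq i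
    cases s with
    | zero => simp
    | succ s =>
      rw [Finset.powersetCard_succ_insert ha]
      have hdisj : Disjoint (Finset.powersetCard (s+1) C)
          ((Finset.powersetCard s C).image (insert a)) := by
        rw [Finset.disjoint_right]
        intro S hS hS'
        obtain ⟨S', hS'', rfl⟩ := Finset.mem_image.1 hS
        have := (Finset.mem_powersetCard.1 hS').1 (Finset.mem_insert_self a S')
        exact ha this
      rw [Finset.sum_union hdisj]
      have himg : ∑ S ∈ (Finset.powersetCard s C).image (insert a), ∏ f ∈ S, q f
          = q a * ∑ S ∈ Finset.powersetCard s C, ∏ f ∈ S, q f := by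
        rw [Finset.sum_image, Finset.mul_sum]
        · refine Finset.sum_congr rfl fun S hS => ?_
          have haS : a ∉ S := fun hmem =>
            ha ((Finset.mem_powersetCard.1 hS).1 hmem)
          rw [Finset.prod_insert haS]
        · intro S hS S' hS' hins
          have haS : a ∉ S := fun hmem => ha ((Finset.mem_powersetCard.1 hS).1 hmem)
          have haS' : a ∉ S' := fun hmem => ha ((Finset.mem_powersetCard.1 hS').1 hmem)
          rw [← Finset.erase_insert haS, ← Finset.erase_insert haS', hins]
      rw [himg, Finset.sum_insert ha]
      have h1 := ih (s+1)
      have h2 := ih s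
      have hpow : (∑ f ∈ C, q f) ^ s ≤ (q a + ∑ f ∈ C, q f) ^ s :=
        pow_le_pow_left₀ hT (by linarith [hq a]) s
      have hexp : (q a + ∑ f ∈ C, q f) ^ (s+1)
          = (q a + ∑ f ∈ C, q f) * (q a + ∑ f ∈ C, q f) ^ s := by ring
      have key : (q a + ∑ f ∈ C, q f) * (∑ f ∈ C, q f) ^ s
          ≤ (q a + ∑ f ∈ C, q f) * (q a + ∑ f ∈ C, q f) ^ s :=
        mul_le_mul_of_nonneg_left hpow (by linarith [hq a])
      have hTs : (0:ℝ) ≤ (∑ f ∈ C, q f) ^ s := pow_nonneg hT s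
      have h3 : q a * ∑ S ∈ Finset.powersetCard s C, ∏ f ∈ S, q f
          ≤ q a * (∑ f ∈ C, q f) ^ s := mul_le_mul_of_nonneg_left h2 (hq a)
      have h4 : (q a + ∑ f ∈ C, q f) * (∑ f ∈ C, q f) ^ s
          = q a * (∑ f ∈ C, q f) ^ s + (∑ f ∈ C, q f) ^ (s+1) := by ring
      linarith

lemma concave_key (α : ℝ) (hα0 : 0 < α) (hα1 : α < 1) (n : ℕ) :
    (n:ℝ) ^ (1-α) + (1-α) * ((n:ℝ)+1) ^ (-α) ≤ ((n:ℝ)+1) ^ (1-α) := by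
  set x : ℝ := (n:ℝ) + 1 with hxdef
  set y : ℝ := (n:ℝ) with hydef
  have hy : (0:ℝ) ≤ y := Nat.cast_nonneg n
  have hx : (0:ℝ) < x := by positivity
  set p : ℝ := 1 - α with hpdef
  have hp0 : 0 < p := by simp [hpdef]; linarith
  have hp1 : p ≤ 1 := by simp [hpdef]; linarith
  have h := Real.geom_mean_le_arith_mean2_weighted (le_of_lt hp0) (by linarith : (0:ℝ) ≤ α)
    (by positivity : (0:ℝ) ≤ y / x) (zero_le_one) (by ring : p + α = 1)
  rw [Real.one_rpow, mul_one, mul_one] at h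
  -- h : (y / x) ^ p ≤ p * (y / x) + α
  have hxp : (0:ℝ) < x ^ p := Real.rpow_pos_of_pos hx p
  have hdiv : (y / x) ^ p = y ^ p / x ^ p := Real.div_rpow hy (le_of_lt hx) p
  have h2 : y ^ p ≤ (p * (y / x) + α) * x ^ p := by
    rw [hdiv] at h
    calc y ^ p = y ^ p / x ^ p * x ^ p := by field_simp
    _ ≤ (p * (y / x) + α) * x ^ p := mul_le_mul_of_nonneg_right h (le_of_lt hxp)
  have hxpm : x ^ p = x * x ^ (-α) := by
    rw [← Real.rpow_one_add' (le_of_lt hx) (by simp [hpdef]; linarith)]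
    ring_nf
    rw [hpdef]
  have hu : (0:ℝ) < x ^ (-α) := Real.rpow_pos_of_pos hx _
  have h3 : (p * (y / x) + α) * x ^ p = p * y * x ^ (-α) + α * x * x ^ (-α) := by
    rw [hxpm]; field_simp
  rw [h3] at h2
  -- goal : y ^ p + p * x ^ (-α) ≤ x ^ p
  rw [hxpm]
  have hid : p * y * x ^ (-α) + α * x * x ^ (-α) + p * x ^ (-α) = x * x ^ (-α) := by
    rw [hxdef, hpdef]; ring
  linarith

lemma sum_rpow_le (α : ℝ) (hα0 : 0 < α) (hα1 : α < 1) :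
    ∀ n : ℕ, ∑ k ∈ Finset.range (n+1), (k:ℝ) ^ (-α) ≤ (1-α)⁻¹ * (n:ℝ) ^ (1-α) := by
  intro n
  induction n with
  | zero =>
    simp [Real.zero_rpow (by linarith : -α ≠ 0), Real.zero_rpow (by linarith : 1-α ≠ 0)]
  | succ n ih =>
    rw [Finset.sum_range_succ]
    have hkey := concave_key α hα0 hα1 n
    have h1α : (0:ℝ) < 1 - α := by linarith
    have hK : (0:ℝ) < (1-α)⁻¹ := by positivity
    push_cast
    have : ((n:ℝ)+1) ^ (-α) = (1-α)⁻¹ * ((1-α) * ((n:ℝ)+1) ^ (-α)) := by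
      rw [← mul_assoc, inv_mul_cancel₀ (by linarith : (1:ℝ)-α ≠ 0), one_mul]
    rw [this]
    calc ∑ k ∈ Finset.range (n+1), (k:ℝ) ^ (-α) + (1-α)⁻¹ * ((1-α) * ((n:ℝ)+1) ^ (-α))
        ≤ (1-α)⁻¹ * (n:ℝ) ^ (1-α) + (1-α)⁻¹ * ((1-α) * ((n:ℝ)+1) ^ (-α)) := by linarith
    _ = (1-α)⁻¹ * ((n:ℝ) ^ (1-α) + (1-α) * ((n:ℝ)+1) ^ (-α)) := by ring
    _ ≤ (1-α)⁻¹ * ((n:ℝ)+1) ^ (1-α) := by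
        exact mul_le_mul_of_nonneg_left hkey (le_of_lt hK)

lemma monotone_eq_of_count {h : ℕ} {f g : Fin h → ℕ} (hf : Monotone f) (hg : Monotone g)
    (hc : ∀ k, (List.ofFn f).count k = (List.ofFn g).count k) : f = g := by
  have hp : (List.ofFn f).Perm (List.ofFn g) := List.perm_iff_count.2 hc
  exact List.ofFn_injective (List.Perm.eq_of_sortedLE hf.sortedLE_ofFn hg.sortedLE_ofFn hp)

lemma sum_count_identity {h : ℕ} (f : Fin h → ℕ) :
    ∑ k ∈ (List.ofFn f).toFinset, (List.ofFn f).count k * k = ∑ i, f i := by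
  have := Finset.sum_multiset_map_count ((List.ofFn f : List ℕ) : Multiset ℕ) (id : ℕ → ℕ)
  simp only [Multiset.map_id', Multiset.sum_coe, List.toFinset_coe, Multiset.coe_count,
    smul_eq_mul, id] at this
  rw [← this]
  simp [List.sum_ofFn]


noncomputable def cand (h n : ℕ) : Finset (Fin h → ℕ) :=
  @Finset.filter _ (fun f => Monotone f ∧ ∑ i, f i = n) (fun _ => Classical.propDecidable _)
    (Fintype.piFinset fun _ => Finset.range (n+1))

lemma mem_cand {h n : ℕ} {f : Fin h → ℕ} : f ∈ cand h n ↔ Monotone f ∧ ∑ i, f i = n := by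
  have hmf := @Finset.mem_filter _ (fun f : Fin h → ℕ => Monotone f ∧ ∑ i, f i = n)
    (fun _ => Classical.propDecidable _) (Fintype.piFinset fun _ => Finset.range (n+1)) f
  constructor
  · intro hf
    exact (hmf.1 hf).2
  · intro ⟨h1, h2⟩
    refine hmf.2 ⟨Fintype.mem_piFinset.2 fun i => ?_, h1, h2⟩
    have : f i ≤ n := by
      calc f i ≤ ∑ j, f j := Finset.single_le_sum (fun j _ => Nat.zero_le _) (Finset.mem_univ i)
      _ = n := h2
    simp only [Finset.mem_range]
    omega

lemma core_bound (α : ℝ) (hα0 : 0 < α) (hα1 : α < 1) (h : ℕ) (hh : 2 ≤ h)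
    (n : ℕ) (hn : 1 ≤ n) (p : ℕ → ℝ) (hp0 : ∀ k, 0 ≤ p k)
    (hple : ∀ k, p k ≤ (k:ℝ) ^ (-α)) :
    ∑ f ∈ cand h n, ∏ k ∈ (List.ofFn f).toFinset, p k ≤
      ((h:ℝ) * (((h:ℝ)+1)^(h-1) * ((h:ℝ)+1)) * ((h:ℝ) * ((1-α)⁻¹)^(h-1)))
        * (n:ℝ) ^ ((h:ℝ)*(1-α)-1) := by
  classical
  have hn0 : (0:ℝ) < n := by exact_mod_cast hn
  have hh0 : 0 < h := by omega
  have hh0R : (0:ℝ) < h := by exact_mod_cast hh0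
  have h1α : (0:ℝ) < 1 - α := by linarith
  set R : (Fin h → ℕ) → Finset ℕ := fun f => (List.ofFn f).toFinset with hR
  set Mi : Fin h := ⟨h-1, by omega⟩ with hMi
  set M : (Fin h → ℕ) → ℕ := fun f => f Mi with hM
  set W : (Fin h → ℕ) → Finset ℕ := fun f => (R f).erase (M f) with hW
  have hMmem : ∀ f : Fin h → ℕ, M f ∈ R f := by
    intro f
    rw [hR, List.mem_toFinset, List.mem_ofFn]
    exact ⟨Mi, rfl⟩
  have hcand : ∀ f ∈ cand h n, Monotone f ∧ ∑ i, f i = n := fun f hf => mem_cand.1 hf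
  have hfle : ∀ f ∈ cand h n, ∀ i, f i ≤ M f := by
    intro f hf i
    refine (hcand f hf).1 ?_
    rw [Fin.le_def]
    have := i.isLt
    simp only [hMi]
    omega
  have hnle : ∀ f ∈ cand h n, n ≤ h * M f := by
    intro f hf
    calc n = ∑ i, f i := (hcand f hf).2.symm
    _ ≤ ∑ _i : Fin h, M f := Finset.sum_le_sum (fun i _ => hfle f hf i)
    _ = h * M f := by simp [Finset.sum_const, Finset.card_univ, mul_comm]
  -- Step 1 : pointwise bound
  have step1 : ∀ f ∈ cand h n,
      ∏ k ∈ R f, p k ≤ ((h:ℝ) * (n:ℝ)^(-α)) * ∏ k ∈ W f, (k:ℝ)^(-α) := by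
    intro f hf
    have hsplit : ∏ k ∈ R f, p k = p (M f) * ∏ k ∈ W f, p k :=
      (Finset.mul_prod_erase (R f) p (hMmem f)).symm
    have hMpos : (0:ℝ) < (M f : ℝ) := by
      have := hnle f hf
      have : 0 < M f := by
        by_contra hc
        push_neg at hc
        interval_cases hMf : M f <;> omega
      exact_mod_cast this
    have a2 : ((n:ℝ)/(h:ℝ)) ≤ (M f : ℝ) := by
      rw [div_le_iff₀ hh0R]
      have := hnle f hf
      calc (n:ℝ) ≤ ((h * M f : ℕ) : ℝ) := by exact_mod_cast this
      _ = (M f:ℝ) * (h:ℝ) := by push_cast; ring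
    have a3 : ((M f:ℝ))^(-α) ≤ ((n:ℝ)/(h:ℝ))^(-α) :=
      Real.rpow_le_rpow_of_nonpos (by positivity) a2 (by linarith)
    have a4 : ((n:ℝ)/(h:ℝ))^(-α) = (h:ℝ)^α * (n:ℝ)^(-α) := by
      rw [Real.div_rpow (le_of_lt hn0) (le_of_lt hh0R),
        Real.rpow_neg (le_of_lt hh0R), div_eq_mul_inv, inv_inv]
      ring
    have a5 : (h:ℝ)^α ≤ (h:ℝ) := by
      calc (h:ℝ)^α ≤ (h:ℝ)^(1:ℝ) := by
            apply Real.rpow_le_rpow_of_exponent_le _ (le_of_lt hα1)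
            exact_mod_cast (by omega : 1 ≤ h)
      _ = (h:ℝ) := Real.rpow_one _
    have h1 : p (M f) ≤ (h:ℝ) * (n:ℝ)^(-α) := by
      calc p (M f) ≤ ((M f:ℝ))^(-α) := hple _
      _ ≤ ((n:ℝ)/(h:ℝ))^(-α) := a3
      _ = (h:ℝ)^α * (n:ℝ)^(-α) := a4
      _ ≤ (h:ℝ) * (n:ℝ)^(-α) :=
          mul_le_mul_of_nonneg_right a5 (Real.rpow_nonneg (le_of_lt hn0) _)
    have h2 : ∏ k ∈ W f, p k ≤ ∏ k ∈ W f, (k:ℝ)^(-α) :=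
      Finset.prod_le_prod (fun k _ => hp0 k) (fun k _ => hple k)
    rw [hsplit]
    exact mul_le_mul h1 h2 (Finset.prod_nonneg fun k _ => hp0 k) (by positivity)
  -- cardinality facts
  have hcard_le : ∀ f : Fin h → ℕ, (W f).card ≤ h - 1 := by
    intro f
    have h1 : (R f).card ≤ h := by
      rw [hR]
      exact le_trans (List.toFinset_card_le _) (by simp)
    rw [hW]
    rw [Finset.card_erase_of_mem (hMmem f)]
    omega
  have hWsub : ∀ f ∈ cand h n, W f ⊆ Finset.range (n+1) := by
    intro f hf k hk
    have hkR : k ∈ R f := Finset.mem_of_mem_erase hk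
    rw [hR, List.mem_toFinset, List.mem_ofFn] at hkR
    obtain ⟨i, rfl⟩ := hkR
    have hle : f i ≤ n := by
      calc f i ≤ ∑ j, f j := Finset.single_le_sum (fun j _ => Nat.zero_le _) (Finset.mem_univ i)
      _ = n := (hcand f hf).2
    simp only [Finset.mem_range]
    omega
  have hcle : ∀ (g : Fin h → ℕ) (k : ℕ), (List.ofFn g).count k ≤ h := by
    intro g k
    calc (List.ofFn g).count k ≤ (List.ofFn g).length := List.count_le_length
    _ = h := by simp
  -- fiber bound
  have hfiber : ∀ V ∈ (cand h n).image W,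
      (((cand h n).filter (fun f => W f = V)).card : ℝ) ≤ ((h:ℝ)+1)^(h-1) * ((h:ℝ)+1) := by
    intro V hV
    obtain ⟨f0, hf0, rfl⟩ := Finset.mem_image.1 hV
    have hVcard : (W f0).card ≤ h - 1 := hcard_le f0
    open Fin.NatCast in
    have hinj : Set.InjOn
        (fun f : Fin h → ℕ =>
          ((fun k : {x // x ∈ W f0} => ((List.ofFn f).count k.1 : Fin (h+1))),
            ((List.ofFn f).count (M f) : Fin (h+1))))
        ↑((cand h n).filter (fun f => W f = W f0)) := by
      intro f hf f' hf' heq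
      simp only [Finset.coe_filter, Set.mem_setOf_eq] at hf hf'
      obtain ⟨hfc, hWf⟩ := hf
      obtain ⟨hfc', hWf'⟩ := hf'
      have hcomp1 : ∀ k ∈ W f0, (List.ofFn f).count k = (List.ofFn f').count k := by
        intro k hk
        have h1 := congrFun (congrArg Prod.fst heq) ⟨k, hk⟩
        have hv := congrArg Fin.val h1
        simpa [Fin.val_natCast, Nat.mod_eq_of_lt (Nat.lt_succ_of_le (hcle f k)),
          Nat.mod_eq_of_lt (Nat.lt_succ_of_le (hcle f' k))] using hv
      have hcomp2 : (List.ofFn f).count (M f) = (List.ofFn f').count (M f') := by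
        have h1 := congrArg Prod.snd heq
        have hv := congrArg Fin.val h1
        simpa [Fin.val_natCast, Nat.mod_eq_of_lt (Nat.lt_succ_of_le (hcle f (M f))),
          Nat.mod_eq_of_lt (Nat.lt_succ_of_le (hcle f' (M f')))] using hv
      have hsum : ∀ g : Fin h → ℕ, g ∈ cand h n → W g = W f0 →
          (List.ofFn g).count (M g) * M g + ∑ k ∈ W f0, (List.ofFn g).count k * k = n := by
        intro g hg hWg
        have hnotmem : M g ∉ W f0 := by
          rw [← hWg, hW]
          exact Finset.notMem_erase _ _
        have hRg : R g = insert (M g) (W f0) := by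
          rw [← hWg, hW, Finset.insert_erase (hMmem g)]
        have hid := sum_count_identity g
        rw [show (List.ofFn g).toFinset = R g from rfl, hRg,
          Finset.sum_insert hnotmem] at hid
        rw [hid, (hcand g hg).2]
      have hsumf := hsum f hfc hWf
      have hsumf' := hsum f' hfc' hWf'
      have hsumW : ∑ k ∈ W f0, (List.ofFn f).count k * k
          = ∑ k ∈ W f0, (List.ofFn f').count k * k :=
        Finset.sum_congr rfl (fun k hk => by rw [hcomp1 k hk])
      have hcpos : 0 < (List.ofFn f).count (M f) := by
        rw [List.count_pos_iff]
        rw [← List.mem_toFinset]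
        exact hMmem f
      have hMM : M f = M f' := by
        have : (List.ofFn f).count (M f) * M f = (List.ofFn f').count (M f') * M f' := by
          omega
        rw [← hcomp2] at this
        exact Nat.eq_of_mul_eq_mul_left hcpos this
      apply monotone_eq_of_count (hcand f hfc).1 (hcand f' hfc').1
      intro k
      by_cases hkV : k ∈ W f0
      · exact hcomp1 k hkV
      by_cases hkM : k = M f
      · rw [hkM, hcomp2, hMM]
      · have hR1 : R f = insert (M f) (W f0) := by
          rw [← hWf, hW, Finset.insert_erase (hMmem f)]
        have hR2 : R f' = insert (M f') (W f0) := by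
          rw [← hWf', hW, Finset.insert_erase (hMmem f')]
        have hk1 : k ∉ R f := by
          rw [hR1]
          simp only [Finset.mem_insert]
          tauto
        have hk2 : k ∉ R f' := by
          rw [hR2, ← hMM]
          simp only [Finset.mem_insert]
          tauto
        rw [hR, List.mem_toFinset] at hk1 hk2
        rw [List.count_eq_zero.2 hk1, List.count_eq_zero.2 hk2]
    have hcard := Finset.card_le_card_of_injOn _ (fun f _ => Finset.mem_univ _) hinj
    have hcard2 : (Finset.univ :
        Finset (({x // x ∈ W f0} → Fin (h+1)) × Fin (h+1))).card
        = (h+1)^((W f0).card) * (h+1) := by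
      rw [Finset.card_univ, Fintype.card_prod, Fintype.card_fun]
      simp [Fintype.card_coe]
    have : (((cand h n).filter (fun f => W f = W f0)).card : ℝ)
        ≤ (((h+1)^((W f0).card) * (h+1) : ℕ) : ℝ) := by
      exact_mod_cast hcard.trans (le_of_eq hcard2)
    refine this.trans ?_
    push_cast
    have : ((h:ℝ)+1)^((W f0).card) ≤ ((h:ℝ)+1)^(h-1) :=
      pow_le_pow_right₀ (by linarith) hVcard
    nlinarith [pow_nonneg (by linarith : (0:ℝ) ≤ (h:ℝ)+1) ((W f0).card)]
  -- step 2 : fiber decomposition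
  set g : Finset ℕ → ℝ := fun V => ∏ k ∈ V, (k:ℝ)^(-α) with hg
  have hg0 : ∀ V, 0 ≤ g V := fun V =>
    Finset.prod_nonneg fun k _ => Real.rpow_nonneg (Nat.cast_nonneg k) _
  set B : ℝ := ((h:ℝ)+1)^(h-1) * ((h:ℝ)+1) with hB
  have hB0 : 0 ≤ B := by positivity
  set 𝒲 : Finset (Finset ℕ) :=
    (Finset.range h).biUnion (fun d => Finset.powersetCard d (Finset.range (n+1))) with h𝒲
  have himgsub : (cand h n).image W ⊆ 𝒲 := by
    intro V hV
    obtain ⟨f, hf, rfl⟩ := Finset.mem_image.1 hV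
    rw [h𝒲, Finset.mem_biUnion]
    exact ⟨(W f).card, Finset.mem_range.2 (by have := hcard_le f; omega),
      Finset.mem_powersetCard.2 ⟨hWsub f hf, rfl⟩⟩
  have step2 : ∑ f ∈ cand h n, g (W f) ≤ B * ∑ V ∈ 𝒲, g V := by
    rw [Finset.sum_comp g W]
    calc ∑ V ∈ (cand h n).image W, ((cand h n).filter (fun f => W f = V)).card • g V
        ≤ ∑ V ∈ (cand h n).image W, B * g V := by
          refine Finset.sum_le_sum fun V hV => ?_
          rw [nsmul_eq_mul]
          exact mul_le_mul_of_nonneg_right (hfiber V hV) (hg0 V)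
    _ = B * ∑ V ∈ (cand h n).image W, g V := by rw [Finset.mul_sum]
    _ ≤ B * ∑ V ∈ 𝒲, g V := by
          refine mul_le_mul_of_nonneg_left ?_ hB0
          exact Finset.sum_le_sum_of_subset_of_nonneg himgsub (fun V _ _ => hg0 V)
  -- step 3
  set base : ℝ := (1-α)⁻¹ * (n:ℝ)^(1-α) with hbase
  have hbase1 : (1:ℝ) ≤ base := by
    have i1 : (1:ℝ) ≤ (1-α)⁻¹ := by
      rw [le_inv_comm₀ one_pos h1α]
      linarith
    have i2 : (1:ℝ) ≤ (n:ℝ)^(1-α) := by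
      calc (1:ℝ) = (1:ℝ)^(1-α) := (Real.one_rpow _).symm
      _ ≤ (n:ℝ)^(1-α) := Real.rpow_le_rpow zero_le_one (by exact_mod_cast hn) (by linarith)
    calc (1:ℝ) = 1 * 1 := by ring
    _ ≤ (1-α)⁻¹ * (n:ℝ)^(1-α) := mul_le_mul i1 i2 zero_le_one (by positivity)
  have step3 : ∑ V ∈ 𝒲, g V ≤ (h:ℝ) * base^(h-1) := by
    rw [h𝒲, Finset.sum_biUnion]
    · calc ∑ d ∈ Finset.range h, ∑ V ∈ Finset.powersetCard d (Finset.range (n+1)), g V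
          ≤ ∑ _d ∈ Finset.range h, base^(h-1) := by
            refine Finset.sum_le_sum fun d hd => ?_
            have e1 := esymm_le (fun k : ℕ => (k:ℝ)^(-α))
              (fun k => Real.rpow_nonneg (Nat.cast_nonneg k) _) (Finset.range (n+1)) d
            have e2 : ∑ k ∈ Finset.range (n+1), (k:ℝ)^(-α) ≤ base :=
              sum_rpow_le α hα0 hα1 n
            have e3 : (∑ k ∈ Finset.range (n+1), (k:ℝ)^(-α))^d ≤ base^d :=
              pow_le_pow_left₀ (Finset.sum_nonneg fun k _ =>
                Real.rpow_nonneg (Nat.cast_nonneg k) _) e2 d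
            have e4 : base^d ≤ base^(h-1) :=
              pow_le_pow_right₀ hbase1 (by have := Finset.mem_range.1 hd; omega)
            exact le_trans e1 (le_trans e3 e4)
      _ = (h:ℝ) * base^(h-1) := by
            rw [Finset.sum_const, Finset.card_range, nsmul_eq_mul]
    · intro d hd d' hd' hne
      simp only [Function.onFun]
      rw [Finset.disjoint_left]
      intro V hV hV'
      have c1 := (Finset.mem_powersetCard.1 hV).2
      have c2 := (Finset.mem_powersetCard.1 hV').2
      exact hne (by omega)
  -- assemble
  have hpowsplit : base^(h-1) = ((1-α)⁻¹)^(h-1) * ((n:ℝ)^(1-α))^(h-1) := mul_pow _ _ _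
  have hexp : (n:ℝ)^(-α) * ((n:ℝ)^(1-α))^(h-1) = (n:ℝ)^((h:ℝ)*(1-α)-1) := by
    rw [← Real.rpow_natCast ((n:ℝ)^(1-α)) (h-1), ← Real.rpow_mul (le_of_lt hn0),
      ← Real.rpow_add hn0]
    congr 1
    rw [Nat.cast_sub (by omega : 1 ≤ h), Nat.cast_one]
    ring
  calc ∑ f ∈ cand h n, ∏ k ∈ (List.ofFn f).toFinset, p k
      = ∑ f ∈ cand h n, ∏ k ∈ R f, p k := rfl
  _ ≤ ∑ f ∈ cand h n, ((h:ℝ) * (n:ℝ)^(-α)) * g (W f) := Finset.sum_le_sum step1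
  _ = ((h:ℝ) * (n:ℝ)^(-α)) * ∑ f ∈ cand h n, g (W f) := by rw [Finset.mul_sum]
  _ ≤ ((h:ℝ) * (n:ℝ)^(-α)) * (B * ((h:ℝ) * base^(h-1))) := by
      refine mul_le_mul_of_nonneg_left ?_ (by positivity)
      calc ∑ f ∈ cand h n, g (W f) ≤ B * ∑ V ∈ 𝒲, g V := step2
      _ ≤ B * ((h:ℝ) * base^(h-1)) := mul_le_mul_of_nonneg_left step3 hB0
  _ = ((h:ℝ) * B * ((h:ℝ) * ((1-α)⁻¹)^(h-1)))
        * ((n:ℝ)^(-α) * ((n:ℝ)^(1-α))^(h-1)) := by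
      rw [hpowsplit]; ring
  _ = ((h:ℝ) * (((h:ℝ)+1)^(h-1) * ((h:ℝ)+1)) * ((h:ℝ) * ((1-α)⁻¹)^(h-1)))
        * (n:ℝ) ^ ((h:ℝ)*(1-α)-1) := by
      rw [hexp, hB]

/-- For a random set in `S(α, m)`: the probability that `n` admits `s` pairwise
disjoint representations as a sum of `h` elements of `A` is at most
`E[r_{h,A}(n)]^s`, and hence at most `C_{h,α,s} · n^{(h(1−α)−1)s}`. -/
theorem stmt11 (α : ℝ) (hα0 : 0 < α) (hα1 : α < 1) (h : ℕ) (hh : 2 ≤ h)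
    (s : ℕ) (hs : 1 ≤ s) :
    ∃ C : ℝ, 0 < C ∧
      ∀ (m : ℕ), 1 ≤ m →
      ∀ (Ω : Type) (_ : MeasurableSpace Ω) (μ : Measure Ω), IsProbabilityMeasure μ →
      ∀ (A : Ω → Set ℕ),
        (∀ n, MeasurableSet {ω | n ∈ A ω}) →
        iIndepSet (fun n => {ω | n ∈ A ω}) μ →
        (∀ n, m ≤ n → μ {ω | n ∈ A ω} = ENNReal.ofReal ((n : ℝ) ^ (-α))) →
        (∀ n, n < m → μ {ω | n ∈ A ω} = 0) →
        ∀ n : ℕ, 1 ≤ n →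
          (μ {ω | ∃ S : Finset (Fin h → ℕ), S.card = s ∧
              (∀ f ∈ S, f ∈ reps (A ω) h n) ∧ DisjFam S}).toReal ≤
            (∫ ω, (repCount (A ω) h n : ℝ) ∂μ) ^ s ∧
          (μ {ω | ∃ S : Finset (Fin h → ℕ), S.card = s ∧
              (∀ f ∈ S, f ∈ reps (A ω) h n) ∧ DisjFam S}).toReal ≤
            C * (n : ℝ) ^ ((h * (1 - α) - 1) * s) := by
  classical
  have hh0 : 0 < h := by omega
  have hh0R : (0:ℝ) < (h:ℝ) := by exact_mod_cast hh0
  have h1α : (0:ℝ) < 1 - α := by linarith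
  set D : ℝ := (h:ℝ) * (((h:ℝ)+1)^(h-1) * ((h:ℝ)+1)) * ((h:ℝ) * ((1-α)⁻¹)^(h-1)) with hD
  have hD0 : 0 < D := by
    apply mul_pos (mul_pos hh0R (by positivity))
    apply mul_pos hh0R (by positivity)
  refine ⟨D^s, pow_pos hD0 s, ?_⟩
  intro m hm Ω mΩ μ hprob A hmeas hind hge hlt n hn
  have hn0 : (0:ℝ) < (n:ℝ) := by exact_mod_cast hn
  set Ev : Set Ω := {ω | ∃ S : Finset (Fin h → ℕ), S.card = s ∧
      (∀ f ∈ S, f ∈ reps (A ω) h n) ∧ DisjFam S} with hEv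
  set R : (Fin h → ℕ) → Finset ℕ := fun f => (List.ofFn f).toFinset with hRdef
  set E : (Fin h → ℕ) → Set Ω := fun f => ⋂ k ∈ R f, {ω | k ∈ A ω} with hEdef
  set p : ℕ → ℝ := fun k => (μ {ω | k ∈ A ω}).toReal with hpdef
  set q : (Fin h → ℕ) → ℝ := fun f => (μ (E f)).toReal with hqdef
  have hp0 : ∀ k, 0 ≤ p k := fun k => ENNReal.toReal_nonneg
  have hq0 : ∀ f, 0 ≤ q f := fun f => ENNReal.toReal_nonneg
  have hple : ∀ k, p k ≤ (k:ℝ)^(-α) := by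
    intro k
    by_cases hk : m ≤ k
    · rw [show p k = (μ {ω | k ∈ A ω}).toReal from rfl, hge k hk,
        ENNReal.toReal_ofReal (Real.rpow_nonneg (Nat.cast_nonneg k) _)]
    · rw [show p k = (μ {ω | k ∈ A ω}).toReal from rfl, hlt k (by omega)]
      simpa using Real.rpow_nonneg (Nat.cast_nonneg k) (-α)
  have hEmeas : ∀ f, MeasurableSet (E f) := by
    intro f
    exact MeasurableSet.biInter ((R f).countable_toSet) (fun k _ => hmeas k)
  have hEmem : ∀ f ω, ω ∈ E f ↔ ∀ i, f i ∈ A ω := by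
    intro f ω
    simp only [hEdef, Set.mem_iInter, Set.mem_setOf_eq]
    constructor
    · intro H i
      exact H (f i) (by rw [hRdef, List.mem_toFinset, List.mem_ofFn]; exact ⟨i, rfl⟩)
    · intro H k hk
      rw [hRdef, List.mem_toFinset, List.mem_ofFn] at hk
      obtain ⟨i, rfl⟩ := hk
      exact H i
  have hμE : ∀ f, μ (E f) = ∏ k ∈ R f, μ {ω | k ∈ A ω} := by
    intro f
    rw [show E f = ⋂ k ∈ R f, {ω | k ∈ A ω} from rfl]
    exact hind.meas_biInter (R f)
  have hqp : ∀ f, q f = ∏ k ∈ R f, p k := by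
    intro f
    rw [show q f = (μ (E f)).toReal from rfl, hμE f, ENNReal.toReal_prod]
  -- expectation identity
  have hreps : ∀ ω, reps (A ω) h n = ↑((cand h n).filter (fun f => ∀ i, f i ∈ A ω)) := by
    intro ω
    ext f
    simp only [reps, Set.mem_setOf_eq, Finset.coe_filter, mem_cand]
    tauto
  have hrepCount : ∀ ω, (repCount (A ω) h n : ℝ)
      = ∑ f ∈ cand h n, Set.indicator (E f) (fun _ => (1:ℝ)) ω := by
    intro ω
    rw [repCount, hreps ω, Set.ncard_coe_finset, Finset.card_filter]
    push_cast
    refine Finset.sum_congr rfl fun f hf => ?_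
    by_cases hc : ∀ i, f i ∈ A ω
    · rw [if_pos hc, Set.indicator_of_mem ((hEmem f ω).2 hc)]
    · rw [if_neg hc, Set.indicator_of_notMem (fun hc' => hc ((hEmem f ω).1 hc'))]
  have hint : ∫ ω, (repCount (A ω) h n : ℝ) ∂μ = ∑ f ∈ cand h n, q f := by
    have h1 : ∫ ω, (repCount (A ω) h n : ℝ) ∂μ
        = ∫ ω, ∑ f ∈ cand h n, Set.indicator (E f) (fun _ => (1:ℝ)) ω ∂μ :=
      integral_congr_ae (Filter.Eventually.of_forall hrepCount)
    rw [h1, integral_finset_sum _ (fun f _ => (integrable_const (1:ℝ)).indicator (hEmeas f))]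
    refine Finset.sum_congr rfl fun f _ => ?_
    rw [integral_indicator_const (1:ℝ) (hEmeas f), smul_eq_mul, mul_one]; rfl
  -- union bound
  set 𝒮 : Finset (Finset (Fin h → ℕ)) :=
    Finset.filter (fun S => DisjFam S) (Finset.powersetCard s (cand h n)) with h𝒮
  have hEvsub : Ev ⊆ ⋃ S ∈ 𝒮, ⋂ f ∈ S, E f := by
    rintro ω ⟨S, hcard, hrep, hdisj⟩
    have hSC : S ⊆ cand h n := fun f hf => mem_cand.2 ⟨(hrep f hf).1, (hrep f hf).2.2⟩
    have hS𝒮 : S ∈ 𝒮 :=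
      Finset.mem_filter.2 ⟨Finset.mem_powersetCard.2 ⟨hSC, hcard⟩, hdisj⟩
    exact Set.mem_iUnion₂.2 ⟨S, hS𝒮,
      Set.mem_iInter₂.2 fun f hf => (hEmem f ω).2 (hrep f hf).2.1⟩
  have hcoeR : ∀ g : Fin h → ℕ, (↑(R g) : Set ℕ) = Set.range g := by
    intro g
    ext x
    simp [hRdef, List.mem_toFinset, List.mem_ofFn]
  have hdisjR : ∀ S ∈ 𝒮, (↑S : Set (Fin h → ℕ)).PairwiseDisjoint R := by
    intro S hS f hf f' hf' hne
    have hd := (Finset.mem_filter.1 hS).2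
    have hdr := hd f (by exact_mod_cast hf) f' (by exact_mod_cast hf') hne
    have : Disjoint (↑(R f) : Set ℕ) (↑(R f')) := by
      rw [hcoeR, hcoeR]; exact hdr
    exact Finset.disjoint_coe.1 this
  have hprodS : ∀ S ∈ 𝒮, μ (⋂ f ∈ S, E f) = ENNReal.ofReal (∏ f ∈ S, q f) := by
    intro S hS
    have hset : (⋂ f ∈ S, E f) = ⋂ k ∈ S.biUnion R, {ω | k ∈ A ω} := by
      ext ω
      simp only [hEdef, Set.mem_iInter, Set.mem_setOf_eq, Finset.mem_biUnion]
      constructor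
      · rintro H k ⟨f, hf, hk⟩
        exact H f hf k hk
      · intro H f hf k hk
        exact H k ⟨f, hf, hk⟩
    rw [hset, hind.meas_biInter, Finset.prod_biUnion (hdisjR S hS)]
    rw [ENNReal.ofReal_prod_of_nonneg (fun f _ => hq0 f)]
    refine Finset.prod_congr rfl fun f hf => ?_
    rw [← hμE f]
    exact (ENNReal.ofReal_toReal (measure_ne_top μ _)).symm
  have hEsum0 : (0:ℝ) ≤ ∑ f ∈ cand h n, q f := Finset.sum_nonneg fun f _ => hq0 f
  have hreal : ∑ S ∈ 𝒮, ∏ f ∈ S, q f ≤ (∑ f ∈ cand h n, q f)^s := by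
    refine le_trans (Finset.sum_le_sum_of_subset_of_nonneg (Finset.filter_subset _ _)
      (fun S _ _ => Finset.prod_nonneg fun f _ => hq0 f)) ?_
    exact esymm_le q hq0 (cand h n) s
  have hub : μ Ev ≤ ENNReal.ofReal ((∑ f ∈ cand h n, q f)^s) := by
    calc μ Ev ≤ μ (⋃ S ∈ 𝒮, ⋂ f ∈ S, E f) := measure_mono hEvsub
    _ ≤ ∑ S ∈ 𝒮, μ (⋂ f ∈ S, E f) := measure_biUnion_finset_le _ _
    _ = ∑ S ∈ 𝒮, ENNReal.ofReal (∏ f ∈ S, q f) := Finset.sum_congr rfl hprodS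
    _ = ENNReal.ofReal (∑ S ∈ 𝒮, ∏ f ∈ S, q f) :=
        (ENNReal.ofReal_sum_of_nonneg (fun S _ => Finset.prod_nonneg fun f _ => hq0 f)).symm
    _ ≤ ENNReal.ofReal ((∑ f ∈ cand h n, q f)^s) := ENNReal.ofReal_le_ofReal hreal
  have hkey1 : (μ Ev).toReal ≤ (∑ f ∈ cand h n, q f)^s :=
    ENNReal.toReal_le_of_le_ofReal (pow_nonneg hEsum0 s) hub
  have hEc : ∑ f ∈ cand h n, q f ≤ D * (n:ℝ)^((h:ℝ)*(1-α)-1) := by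
    have hcb := core_bound α hα0 hα1 h hh n hn p hp0 hple
    calc ∑ f ∈ cand h n, q f = ∑ f ∈ cand h n, ∏ k ∈ (List.ofFn f).toFinset, p k :=
        Finset.sum_congr rfl (fun f _ => hqp f)
    _ ≤ _ := hcb
  constructor
  · rw [hint]
    exact hkey1
  · calc (μ Ev).toReal ≤ (∑ f ∈ cand h n, q f)^s := hkey1
    _ ≤ (D * (n:ℝ)^((h:ℝ)*(1-α)-1))^s := pow_le_pow_left₀ hEsum0 hEc s
    _ = D^s * ((n:ℝ)^((h:ℝ)*(1-α)-1))^s := mul_pow _ _ _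
    _ = D^s * (n:ℝ)^(((h:ℝ)*(1-α)-1)*s) := by
        rw [← Real.rpow_natCast ((n:ℝ)^((h:ℝ)*(1-α)-1)) s,
          ← Real.rpow_mul (le_of_lt hn0)]
end
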